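/- arXiv:1412.5374 — 5 statements merged into one kernel-verified Lean document; each statement's English description precedes it below -/
import Mathlib

section
/- Let (X,Y) be finitely supported discrete random variables with joint pmf p(x,y) and marginals p(x), p(y), with p(x)>0 and p(y)>0 for all x∈𝒳, y∈𝒴. Define the matrix B ∈ ℝ^{|𝒳|×|𝒴|} by B_{xy} = p(x,y)/√(p(x)p(y)) − √(p(x)p(y)). Then the Hirschfeld–Gebelein–Rényi maximal correlation ρ_m(X;Y) equals the spectral (operator) norm ‖B‖ of B. -/
/-!
Write `a = √p_X` and `b = √p_Y`. The substitution `u = a·f`, `v = b·g` turns the constraints on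
`(f, g)` into `a ⬝ u = 0`, `b ⬝ v = 0`, `|u| = |v| = 1`, and `E[f(X) g(Y)]` into `u ⬝ B v`: the
rank-one part `a bᵀ` of `B` contributes `(a ⬝ u)(b ⬝ v) = 0`. Since `B b = 0` and `aᵀ B = 0`,
these orthogonality constraints cost nothing: for a unit `v`, aligning `u` with `B v` and then
`v'` with `Bᵀ u` yields admissible unit vectors with `u ⬝ B v' = |Bᵀ u| ≥ |B v|`.
-/

open BigOperators Finset
open scoped Classical

/-- Hirschfeld–Gebelein–Rényi maximal correlation of a joint pmf `p` on `X × Y`: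
the supremum of `E[f(X) g(Y)]` over zero-mean, unit-second-moment `f`, `g`
(`sSup ∅ = 0` if no such functions exist). -/
noncomputable def maxCorr {X Y : Type*} [Fintype X] [Fintype Y] (p : X → Y → ℝ) : ℝ :=
  sSup {r : ℝ | ∃ f : X → ℝ, ∃ g : Y → ℝ,
    (∑ x, ∑ y, p x y * f x) = 0 ∧
    (∑ x, ∑ y, p x y * g y) = 0 ∧
    (∑ x, ∑ y, p x y * (f x) ^ 2) = 1 ∧
    (∑ x, ∑ y, p x y * (g y) ^ 2) = 1 ∧
    r = ∑ x, ∑ y, p x y * f x * g y}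

/-- Spectral (operator) norm of a real matrix. -/
noncomputable def specNorm {X Y : Type*} [Fintype X] [Fintype Y] (B : Matrix X Y ℝ) : ℝ :=
  sSup {r : ℝ | ∃ v : Y → ℝ, (∑ y, (v y) ^ 2) = 1 ∧
    r = Real.sqrt (∑ x, (B.mulVec v x) ^ 2)}

open Matrix

section DotProduct

variable {ι : Type*} [Fintype ι]

lemma sum_sq_eq_dotProduct_self (v : ι → ℝ) : ∑ i, v i ^ 2 = v ⬝ᵥ v := by
  simp only [dotProduct, sq]

lemma dotProduct_self_nonneg (v : ι → ℝ) : 0 ≤ v ⬝ᵥ v :=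
  sum_nonneg fun i _ => mul_self_nonneg (v i)

lemma dotProduct_le_sqrt_mul_sqrt (u w : ι → ℝ) : u ⬝ᵥ w ≤ √(u ⬝ᵥ u) * √(w ⬝ᵥ w) := by
  simpa only [dotProduct, sq] using Real.sum_mul_le_sqrt_mul_sqrt univ u w

lemma sq_dotProduct_le_mul (u w : ι → ℝ) : (u ⬝ᵥ w) ^ 2 ≤ (u ⬝ᵥ u) * (w ⬝ᵥ w) := by
  simpa only [dotProduct, sq] using sum_mul_sq_le_sq_mul_sq univ u w

noncomputable def normalizeVec (w : ι → ℝ) : ι → ℝ := (√(w ⬝ᵥ w))⁻¹ • w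

lemma dotProduct_normalizeVec (z w : ι → ℝ) : z ⬝ᵥ normalizeVec w = z ⬝ᵥ w / √(w ⬝ᵥ w) := by
  rw [normalizeVec, dotProduct_smul, smul_eq_mul, div_eq_inv_mul]

lemma normalizeVec_dotProduct_self {w : ι → ℝ} (hw : w ≠ 0) :
    normalizeVec w ⬝ᵥ normalizeVec w = 1 := by
  have hpos : 0 < w ⬝ᵥ w :=
    (dotProduct_self_nonneg w).lt_of_ne' (dotProduct_self_eq_zero.not.mpr hw)
  rw [dotProduct_normalizeVec, dotProduct_comm, dotProduct_normalizeVec, div_div,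
    Real.mul_self_sqrt hpos.le, div_self hpos.ne']

end DotProduct

section SpecNorm

variable {X Y : Type*} [Fintype X] [Fintype Y] (B : Matrix X Y ℝ)

lemma specNorm_nonneg : 0 ≤ specNorm B :=
  Real.sSup_nonneg fun _ ⟨_, _, hr⟩ => hr ▸ Real.sqrt_nonneg _

lemma le_specNorm {v : Y → ℝ} (hv : v ⬝ᵥ v = 1) : √(B *ᵥ v ⬝ᵥ B *ᵥ v) ≤ specNorm B := by
  refine le_csSup ⟨√(∑ x, B x ⬝ᵥ B x), ?_⟩ ⟨v, by rwa [sum_sq_eq_dotProduct_self], by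
    rw [sum_sq_eq_dotProduct_self]⟩
  rintro _ ⟨w, hw, rfl⟩
  rw [sum_sq_eq_dotProduct_self] at hw
  gcongr with x
  simpa [mulVec, hw] using sq_dotProduct_le_mul (B x) w

lemma specNorm_le {c : ℝ} (hc : 0 ≤ c) (h : ∀ v : Y → ℝ, v ⬝ᵥ v = 1 → √(B *ᵥ v ⬝ᵥ B *ᵥ v) ≤ c) :
    specNorm B ≤ c := by
  refine Real.sSup_le ?_ hc
  rintro _ ⟨v, hv, rfl⟩
  rw [sum_sq_eq_dotProduct_self] at hv ⊢
  exact h v hv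

end SpecNorm

section OrthBilinValues

variable {X Y : Type*} [Fintype X] [Fintype Y] {B : Matrix X Y ℝ} {a : X → ℝ} {b : Y → ℝ}

variable (B a b) in
def orthBilinValues : Set ℝ :=
  {r | ∃ u : X → ℝ, ∃ v : Y → ℝ,
    a ⬝ᵥ u = 0 ∧ b ⬝ᵥ v = 0 ∧ u ⬝ᵥ u = 1 ∧ v ⬝ᵥ v = 1 ∧ r = u ⬝ᵥ B *ᵥ v}

lemma le_specNorm_of_mem_orthBilinValues {r : ℝ} (hr : r ∈ orthBilinValues B a b) :
    r ≤ specNorm B := by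
  obtain ⟨u, v, -, -, hu, hv, rfl⟩ := hr
  calc u ⬝ᵥ B *ᵥ v ≤ √(u ⬝ᵥ u) * √(B *ᵥ v ⬝ᵥ B *ᵥ v) := dotProduct_le_sqrt_mul_sqrt _ _
    _ ≤ specNorm B := by rw [hu, Real.sqrt_one, one_mul]; exact le_specNorm B hv

lemma bddAbove_orthBilinValues : BddAbove (orthBilinValues B a b) :=
  ⟨specNorm B, fun _ => le_specNorm_of_mem_orthBilinValues⟩

lemma neg_mem_orthBilinValues {r : ℝ} (hr : r ∈ orthBilinValues B a b) :
    -r ∈ orthBilinValues B a b := by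
  obtain ⟨u, v, hau, hbv, hu, hv, rfl⟩ := hr
  exact ⟨-u, v, by simp [hau], hbv, by simp [hu], hv, by simp⟩

lemma sSup_orthBilinValues_nonneg : 0 ≤ sSup (orthBilinValues B a b) := by
  rcases (orthBilinValues B a b).eq_empty_or_nonempty with h | ⟨r, hr⟩
  · rw [h, Real.sSup_empty]
  · have := le_csSup bddAbove_orthBilinValues hr
    have := le_csSup bddAbove_orthBilinValues (neg_mem_orthBilinValues hr)
    linarith

lemma exists_mem_orthBilinValues_ge (ha : a ᵥ* B = 0) (hb : B *ᵥ b = 0) {v : Y → ℝ}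
    (hv : v ⬝ᵥ v = 1) (hBv : B *ᵥ v ≠ 0) :
    ∃ r ∈ orthBilinValues B a b, √(B *ᵥ v ⬝ᵥ B *ᵥ v) ≤ r := by
  set u := normalizeVec (B *ᵥ v)
  set w := u ᵥ* B
  have hBv_eq : √(B *ᵥ v ⬝ᵥ B *ᵥ v) = w ⬝ᵥ v := by
    rw [← dotProduct_mulVec, dotProduct_comm u]
    exact (Real.div_sqrt).symm.trans (dotProduct_normalizeVec _ _).symm
  have hw : w ≠ 0 := by
    rintro hw
    rw [hw, zero_dotProduct, Real.sqrt_eq_zero (dotProduct_self_nonneg _),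
      dotProduct_self_eq_zero] at hBv_eq
    exact hBv hBv_eq
  refine ⟨u ⬝ᵥ B *ᵥ normalizeVec w, ⟨u, normalizeVec w, ?_, ?_, normalizeVec_dotProduct_self hBv,
    normalizeVec_dotProduct_self hw, rfl⟩, ?_⟩
  · rw [dotProduct_normalizeVec, dotProduct_mulVec, ha, zero_dotProduct, zero_div]
  · rw [dotProduct_normalizeVec, dotProduct_comm, ← dotProduct_mulVec, hb, dotProduct_zero,
      zero_div]
  · calc √(B *ᵥ v ⬝ᵥ B *ᵥ v) = w ⬝ᵥ v := hBv_eq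
      _ ≤ √(w ⬝ᵥ w) * √(v ⬝ᵥ v) := dotProduct_le_sqrt_mul_sqrt w v
      _ = u ⬝ᵥ B *ᵥ normalizeVec w := by
        rw [hv, Real.sqrt_one, mul_one, dotProduct_mulVec, dotProduct_normalizeVec,
          Real.div_sqrt]

lemma sSup_orthBilinValues_eq_specNorm (ha : a ᵥ* B = 0) (hb : B *ᵥ b = 0) :
    sSup (orthBilinValues B a b) = specNorm B := by
  refine le_antisymm (Real.sSup_le (fun _ => le_specNorm_of_mem_orthBilinValues)
    (specNorm_nonneg B)) (specNorm_le B sSup_orthBilinValues_nonneg fun v hv => ?_)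
  by_cases hBv : B *ᵥ v = 0
  · simpa [hBv] using sSup_orthBilinValues_nonneg
  · obtain ⟨r, hr, hle⟩ := exists_mem_orthBilinValues_ge ha hb hv hBv
    exact hle.trans (le_csSup bddAbove_orthBilinValues hr)

end OrthBilinValues

section HGR

variable {X Y : Type*} {p : X → Y → ℝ}

noncomputable def sqrtMarginalFst [Fintype Y] (p : X → Y → ℝ) (x : X) : ℝ := √(∑ y, p x y)

noncomputable def sqrtMarginalSnd [Fintype X] (p : X → Y → ℝ) (y : Y) : ℝ := √(∑ x, p x y)

lemma sqrtMarginalFst_mul_self [Fintype Y] (hX : ∀ x, 0 < ∑ y, p x y) (x : X) :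
    sqrtMarginalFst p x * sqrtMarginalFst p x = ∑ y, p x y :=
  Real.mul_self_sqrt (hX x).le

lemma sqrtMarginalSnd_mul_self [Fintype X] (hY : ∀ y, 0 < ∑ x, p x y) (y : Y) :
    sqrtMarginalSnd p y * sqrtMarginalSnd p y = ∑ x, p x y :=
  Real.mul_self_sqrt (hY y).le

lemma sqrtMarginalFst_pos [Fintype Y] (hX : ∀ x, 0 < ∑ y, p x y) (x : X) :
    0 < sqrtMarginalFst p x :=
  Real.sqrt_pos.2 (hX x)

lemma sqrtMarginalSnd_pos [Fintype X] (hY : ∀ y, 0 < ∑ x, p x y) (y : Y) :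
    0 < sqrtMarginalSnd p y :=
  Real.sqrt_pos.2 (hY y)

variable [Fintype X] [Fintype Y]

variable (p) in
noncomputable def hgrMatrix : Matrix X Y ℝ := Matrix.of fun x y =>
  p x y / Real.sqrt ((∑ y', p x y') * (∑ x', p x' y)) -
  Real.sqrt ((∑ y', p x y') * (∑ x', p x' y))

lemma hgrMatrix_apply (hX : ∀ x, 0 < ∑ y, p x y) (x : X) (y : Y) :
    hgrMatrix p x y = p x y / (sqrtMarginalFst p x * sqrtMarginalSnd p y) -
      sqrtMarginalFst p x * sqrtMarginalSnd p y := by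
  rw [hgrMatrix, of_apply, Real.sqrt_mul (hX x).le, sqrtMarginalFst, sqrtMarginalSnd]

lemma sum_sum_mul_left (hX : ∀ x, 0 < ∑ y, p x y) (h : X → ℝ) :
    ∑ x, ∑ y, p x y * h x = ∑ x, sqrtMarginalFst p x * sqrtMarginalFst p x * h x := by
  simp only [← sum_mul, sqrtMarginalFst_mul_self hX]

lemma sum_sum_mul_right (hY : ∀ y, 0 < ∑ x, p x y) (h : Y → ℝ) :
    ∑ x, ∑ y, p x y * h y = ∑ y, sqrtMarginalSnd p y * sqrtMarginalSnd p y * h y := by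
  rw [sum_comm]
  simp only [← sum_mul, sqrtMarginalSnd_mul_self hY]

lemma sum_sum_mul_left_eq_dotProduct (hX : ∀ x, 0 < ∑ y, p x y) (f : X → ℝ) :
    ∑ x, ∑ y, p x y * f x = sqrtMarginalFst p ⬝ᵥ (sqrtMarginalFst p * f) := by
  rw [sum_sum_mul_left hX]
  simp only [dotProduct, Pi.mul_apply, mul_assoc]

lemma sum_sum_mul_right_eq_dotProduct (hY : ∀ y, 0 < ∑ x, p x y) (g : Y → ℝ) :
    ∑ x, ∑ y, p x y * g y = sqrtMarginalSnd p ⬝ᵥ (sqrtMarginalSnd p * g) := by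
  rw [sum_sum_mul_right hY]
  simp only [dotProduct, Pi.mul_apply, mul_assoc]

lemma sum_sum_mul_sq_left_eq_dotProduct (hX : ∀ x, 0 < ∑ y, p x y) (f : X → ℝ) :
    ∑ x, ∑ y, p x y * f x ^ 2 = (sqrtMarginalFst p * f) ⬝ᵥ (sqrtMarginalFst p * f) := by
  rw [sum_sum_mul_left hX]
  exact sum_congr rfl fun x _ => by simp only [Pi.mul_apply]; ring

lemma sum_sum_mul_sq_right_eq_dotProduct (hY : ∀ y, 0 < ∑ x, p x y) (g : Y → ℝ) :
    ∑ x, ∑ y, p x y * g y ^ 2 = (sqrtMarginalSnd p * g) ⬝ᵥ (sqrtMarginalSnd p * g) := by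
  rw [sum_sum_mul_right hY]
  exact sum_congr rfl fun y _ => by simp only [Pi.mul_apply]; ring

lemma hgrMatrix_mulVec_sqrtMarginalSnd (hsum : ∑ x, ∑ y, p x y = 1)
    (hX : ∀ x, 0 < ∑ y, p x y) (hY : ∀ y, 0 < ∑ x, p x y) :
    hgrMatrix p *ᵥ sqrtMarginalSnd p = 0 := by
  have hterm : ∀ x y, hgrMatrix p x y * sqrtMarginalSnd p y =
      p x y / sqrtMarginalFst p x - sqrtMarginalFst p x * ∑ x', p x' y := by
    intro x y
    have := (sqrtMarginalFst_pos hX x).ne'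
    have := (sqrtMarginalSnd_pos hY y).ne'
    rw [hgrMatrix_apply hX, ← sqrtMarginalSnd_mul_self hY]
    field_simp
  funext x
  rw [mulVec, dotProduct, sum_congr rfl fun y _ => hterm x y, sum_sub_distrib,
    ← sum_div, ← mul_sum, sum_comm, hsum, ← sqrtMarginalFst_mul_self hX,
    mul_self_div_self, mul_one, sub_self, Pi.zero_apply]

lemma sqrtMarginalFst_vecMul_hgrMatrix (hsum : ∑ x, ∑ y, p x y = 1)
    (hX : ∀ x, 0 < ∑ y, p x y) (hY : ∀ y, 0 < ∑ x, p x y) :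
    sqrtMarginalFst p ᵥ* hgrMatrix p = 0 := by
  have hterm : ∀ x y, sqrtMarginalFst p x * hgrMatrix p x y =
      p x y / sqrtMarginalSnd p y - sqrtMarginalSnd p y * ∑ y', p x y' := by
    intro x y
    have := (sqrtMarginalFst_pos hX x).ne'
    have := (sqrtMarginalSnd_pos hY y).ne'
    rw [hgrMatrix_apply hX, ← sqrtMarginalFst_mul_self hX]
    field_simp
  funext y
  rw [vecMul, dotProduct, sum_congr rfl fun x _ => hterm x y, sum_sub_distrib,
    ← sum_div, ← mul_sum, hsum, ← sqrtMarginalSnd_mul_self hY,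
    mul_self_div_self, mul_one, sub_self, Pi.zero_apply]

lemma sum_sum_mul_mul_eq (hX : ∀ x, 0 < ∑ y, p x y) (hY : ∀ y, 0 < ∑ x, p x y)
    (f : X → ℝ) (g : Y → ℝ) :
    ∑ x, ∑ y, p x y * f x * g y =
      (sqrtMarginalFst p * f) ⬝ᵥ hgrMatrix p *ᵥ (sqrtMarginalSnd p * g) +
        (sqrtMarginalFst p ⬝ᵥ (sqrtMarginalFst p * f)) *
          (sqrtMarginalSnd p ⬝ᵥ (sqrtMarginalSnd p * g)) := by
  simp only [dotProduct, mulVec, Pi.mul_apply]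
  rw [sum_mul_sum, ← sum_add_distrib]
  refine sum_congr rfl fun x _ => ?_
  rw [mul_sum, ← sum_add_distrib]
  refine sum_congr rfl fun y _ => ?_
  have := (sqrtMarginalFst_pos hX x).ne'
  have := (sqrtMarginalSnd_pos hY y).ne'
  rw [hgrMatrix_apply hX]
  field_simp
  ring

lemma maxCorr_eq_sSup_orthBilinValues (hX : ∀ x, 0 < ∑ y, p x y) (hY : ∀ y, 0 < ∑ x, p x y) :
    maxCorr p = sSup (orthBilinValues (hgrMatrix p) (sqrtMarginalFst p) (sqrtMarginalSnd p)) := by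
  set a := sqrtMarginalFst p
  set b := sqrtMarginalSnd p
  have hcancelX (u : X → ℝ) : a * (u / a) = u :=
    funext fun x => mul_div_cancel₀ _ (sqrtMarginalFst_pos hX x).ne'
  have hcancelY (v : Y → ℝ) : b * (v / b) = v :=
    funext fun y => mul_div_cancel₀ _ (sqrtMarginalSnd_pos hY y).ne'
  unfold maxCorr orthBilinValues
  congr 1
  ext r
  simp only [sum_sum_mul_sq_left_eq_dotProduct hX, sum_sum_mul_sq_right_eq_dotProduct hY]
  simp only [sum_sum_mul_left_eq_dotProduct hX, sum_sum_mul_right_eq_dotProduct hY,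
    sum_sum_mul_mul_eq hX hY]
  constructor
  · rintro ⟨f, g, hf, hg, hf2, hg2, rfl⟩
    exact ⟨a * f, b * g, hf, hg, hf2, hg2, by rw [hf, zero_mul, add_zero]⟩
  · rintro ⟨u, v, hu, hv, hu2, hv2, rfl⟩
    refine ⟨u / a, v / b, ?_⟩
    rw [hcancelX, hcancelY]
    exact ⟨hu, hv, hu2, hv2, by rw [hu, zero_mul, add_zero]⟩

end HGR

theorem stmt0_general {X Y : Type*} [Fintype X] [Fintype Y]
    (p : X → Y → ℝ) (hsum : ∑ x, ∑ y, p x y = 1)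
    (hX : ∀ x, 0 < ∑ y, p x y) (hY : ∀ y, 0 < ∑ x, p x y) :
    maxCorr p = specNorm (Matrix.of fun x y =>
      p x y / Real.sqrt ((∑ y', p x y') * (∑ x', p x' y)) -
      Real.sqrt ((∑ y', p x y') * (∑ x', p x' y))) :=
  (maxCorr_eq_sSup_orthBilinValues hX hY).trans <|
    sSup_orthBilinValues_eq_specNorm (sqrtMarginalFst_vecMul_hgrMatrix hsum hX hY)
      (hgrMatrix_mulVec_sqrtMarginalSnd hsum hX hY)

theorem stmt0 {X Y : Type*} [Fintype X] [Fintype Y]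
    (p : X → Y → ℝ) (hp : ∀ x y, 0 ≤ p x y) (hsum : ∑ x, ∑ y, p x y = 1)
    (hX : ∀ x, 0 < ∑ y, p x y) (hY : ∀ y, 0 < ∑ x, p x y) :
    maxCorr p = specNorm (Matrix.of fun x y =>
      p x y / Real.sqrt ((∑ y', p x y') * (∑ x', p x' y)) -
      Real.sqrt ((∑ y', p x y') * (∑ x', p x' y))) :=
  stmt0_general p hsum hX hY
end

section
/- Let (X,Y) be finitely supported discrete random variables with joint pmf p(x,y) and strictly positive marginals. Then χ²(p(x,y) ‖ p(x)p(y)) / (min{|𝒳|,|𝒴|} − 1) ≤ ρ_m(X;Y)² ≤ χ²(p(x,y) ‖ p(x)p(y)), where χ²(p‖q) = Σ p²/q − 1 is the chi-squared divergence. -/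
open BigOperators Finset
open scoped Classical

/-!
Put `u = √p_X`, `v = √p_Y` and `A(x,y) = p(x,y) / (u(x) v(y)) - u(x) v(y)`. The substitution
`φ = u f`, `ψ = v g` turns `ρ_m` into the supremum of `φᵀ A ψ` over unit vectors `φ ⊥ u`,
`ψ ⊥ v`; since `uᵀ A = 0` and `A v = 0`, this is the largest singular value `σ₁` of `A`.
Moreover `‖A‖_F² = χ²`, and `σ₁² ≤ ‖A‖_F² ≤ rank A · σ₁²`, where `rank A ≤ min(|𝒳|, |𝒴|) - 1`
because `u` and `v` are nonzero null vectors of `A` on either side.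
-/

open Matrix

lemma sq_sSup_le_of_forall_sq_le {S : Set ℝ} {a : ℝ} (ha : 0 ≤ a) (h : ∀ r ∈ S, r ^ 2 ≤ a) :
    sSup S ^ 2 ≤ a := by
  have hupper : sSup S ≤ √a :=
    Real.sSup_le (fun r hr => Real.le_sqrt_of_sq_le (h r hr)) (Real.sqrt_nonneg a)
  have hlower : -√a ≤ sSup S := by
    rcases S.eq_empty_or_nonempty with rfl | ⟨r, hr⟩
    · simp
    · exact (Real.neg_sqrt_le_of_sq_le (h r hr)).trans
        (le_csSup ⟨√a, fun s hs => Real.le_sqrt_of_sq_le (h s hs)⟩ hr)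
  simpa [Real.sq_sqrt ha] using sq_le_sq' hlower hupper

lemma rank_lt_card_width_of_mulVec_eq_zero {m n K : Type*} [Fintype n] [Field K]
    (B : Matrix m n K) {v : n → K} (hv : v ≠ 0) (hBv : B *ᵥ v = 0) : B.rank < Fintype.card n := by
  have hnullity := LinearMap.finrank_range_add_finrank_ker B.mulVecLin
  rw [Module.finrank_fintype_fun_eq_card] at hnullity
  have hker : 0 < Module.finrank K (LinearMap.ker B.mulVecLin) :=
    Module.finrank_pos_iff_exists_ne_zero.2 ⟨⟨v, hBv⟩, fun h => hv (congrArg Subtype.val h)⟩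
  have hrank : B.rank = Module.finrank K (LinearMap.range B.mulVecLin) := rfl
  omega

section RealMatrix

variable {m n : Type*} [Fintype m] [Fintype n]

lemma dotProduct_self_pos {x : n → ℝ} (hx : x ≠ 0) : 0 < x ⬝ᵥ x := by
  simpa using dotProduct_self_star_pos_iff.2 hx

lemma dotProduct_inv_sqrt_smul_self {x : n → ℝ} (hx : x ≠ 0) :
    (√(x ⬝ᵥ x))⁻¹ • x ⬝ᵥ (√(x ⬝ᵥ x))⁻¹ • x = 1 := by
  have hpos := dotProduct_self_pos hx
  rw [smul_dotProduct, dotProduct_smul, smul_eq_mul, smul_eq_mul, ← mul_assoc, ← mul_inv,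
    Real.mul_self_sqrt hpos.le, inv_mul_cancel₀ hpos.ne']

lemma sq_dotProduct_mulVec_le_sum_sq (B : Matrix m n ℝ) {φ : m → ℝ} {ψ : n → ℝ}
    (hφ : φ ⬝ᵥ φ = 1) (hψ : ψ ⬝ᵥ ψ = 1) : (φ ⬝ᵥ B *ᵥ ψ) ^ 2 ≤ ∑ i, ∑ j, B i j ^ 2 := by
  have hcs := sum_mul_sq_le_sq_mul_sq univ (fun z : m × n => B z.1 z.2) (fun z => φ z.1 * ψ z.2)
  simp only [Fintype.sum_prod_type] at hcs
  have hprod : ∑ i, ∑ j, (φ i * ψ j) ^ 2 = 1 := by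
    simp only [mul_pow, ← mul_sum, ← sum_mul]
    simpa [dotProduct, sq] using congrArg₂ (· * ·) hφ hψ
  have hbilin : φ ⬝ᵥ B *ᵥ ψ = ∑ i, ∑ j, B i j * (φ i * ψ j) := by
    simp only [dotProduct, mulVec, mul_sum]
    exact sum_congr rfl fun i _ => sum_congr rfl fun j _ => by ring
  rw [hbilin]
  simpa [hprod] using hcs

/-- The eigenvalues of `Bᴴ B` are values of `‖B w‖²` at unit vectors `w`, they sum to
`‖B‖_F²`, and `rank B` of them are nonzero. -/
lemma sum_sq_le_rank_mul (B : Matrix m n ℝ) {c : ℝ}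
    (h : ∀ w : n → ℝ, w ⬝ᵥ w = 1 → B *ᵥ w ⬝ᵥ B *ᵥ w ≤ c) :
    ∑ i, ∑ j, B i j ^ 2 ≤ B.rank * c := by
  have hM := isHermitian_conjTranspose_mul_self B
  have htrace : ∑ i, ∑ j, B i j ^ 2 = ∑ k, hM.eigenvalues k := by
    have := hM.trace_eq_sum_eigenvalues
    simp only [RCLike.ofReal_real_eq_id, id] at this
    rw [← this, trace, sum_comm]
    simp [mul_apply, sq]
  have heig : ∀ k, hM.eigenvalues k ≤ c := by
    intro k
    have hunit : (hM.eigenvectorBasis k : n → ℝ) ⬝ᵥ hM.eigenvectorBasis k = 1 := by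
      have := real_inner_self_eq_norm_sq (hM.eigenvectorBasis k)
      rw [hM.eigenvectorBasis.orthonormal.1 k, one_pow] at this
      rwa [EuclideanSpace.inner_eq_star_dotProduct, star_trivial] at this
    refine le_of_eq_of_le ?_ (h _ hunit)
    rw [hM.eigenvalues_eq, ← mulVec_mulVec, dotProduct_mulVec, vecMul_conjTranspose]
    simp
  rw [htrace, ← rank_conjTranspose_mul_self, hM.rank_eq_card_non_zero_eigs, Fintype.card_subtype,
    ← sum_filter_ne_zero]
  simpa using sum_le_card_nsmul _ _ _ fun k _ => heig k

/-- Projecting `ψ` onto the orthogonal complement of `v` keeps `B ψ` and does not increase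
the norm. -/
lemma mulVec_dotProduct_le_of_forall_orthogonal (B : Matrix m n ℝ) {v : n → ℝ}
    (hv : v ⬝ᵥ v = 1) (hBv : B *ᵥ v = 0) {c : ℝ} (hc : 0 ≤ c)
    (h : ∀ w : n → ℝ, w ⬝ᵥ w = 1 → v ⬝ᵥ w = 0 → B *ᵥ w ⬝ᵥ B *ᵥ w ≤ c)
    {ψ : n → ℝ} (hψ : ψ ⬝ᵥ ψ = 1) : B *ᵥ ψ ⬝ᵥ B *ᵥ ψ ≤ c := by
  set ψ' := ψ - (v ⬝ᵥ ψ) • v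
  have hBψ' : B *ᵥ ψ' = B *ᵥ ψ := by simp [ψ', mulVec_sub, mulVec_smul, hBv]
  have horth : v ⬝ᵥ ψ' = 0 := by simp [ψ', dotProduct_sub, hv]
  have hnorm : ψ' ⬝ᵥ ψ' ≤ 1 := by
    have : ψ' ⬝ᵥ ψ' = 1 - (v ⬝ᵥ ψ) ^ 2 := by
      simp only [ψ', dotProduct_sub, sub_dotProduct, dotProduct_smul, smul_dotProduct, hv, hψ,
        dotProduct_comm ψ v, smul_eq_mul]
      ring
    linarith [sq_nonneg (v ⬝ᵥ ψ)]
  rcases eq_or_ne ψ' 0 with h0 | h0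
  · rw [← hBψ', h0, mulVec_zero, dotProduct_zero]
    exact hc
  have hpos := dotProduct_self_pos h0
  have hw := h _ (dotProduct_inv_sqrt_smul_self h0) (by rw [dotProduct_smul, horth, smul_zero])
  rw [mulVec_smul, smul_dotProduct, dotProduct_smul, hBψ', smul_smul, smul_eq_mul, ← mul_inv,
    Real.mul_self_sqrt hpos.le, inv_mul_le_iff₀ hpos] at hw
  exact hw.trans (mul_le_of_le_one_left hc hnorm)

end RealMatrix

section DTM

section
variable {X Y : Type*} [Fintype Y] {p : X → Y → ℝ}

noncomputable def sqrtPX (p : X → Y → ℝ) (x : X) : ℝ := √(∑ y, p x y)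

lemma sqrtPX_pos (hX : ∀ x, 0 < ∑ y, p x y) (x : X) : 0 < sqrtPX p x := Real.sqrt_pos.2 (hX x)

lemma sqrtPX_sq (hX : ∀ x, 0 < ∑ y, p x y) (x : X) : sqrtPX p x ^ 2 = ∑ y, p x y :=
  Real.sq_sqrt (hX x).le

end

section
variable {X Y : Type*} [Fintype X] {p : X → Y → ℝ}

noncomputable def sqrtPY (p : X → Y → ℝ) (y : Y) : ℝ := √(∑ x, p x y)

lemma sqrtPY_pos (hY : ∀ y, 0 < ∑ x, p x y) (y : Y) : 0 < sqrtPY p y := Real.sqrt_pos.2 (hY y)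

lemma sqrtPY_sq (hY : ∀ y, 0 < ∑ x, p x y) (y : Y) : sqrtPY p y ^ 2 = ∑ x, p x y :=
  Real.sq_sqrt (hY y).le

end

variable {X Y : Type*} [Fintype X] [Fintype Y] {p : X → Y → ℝ}

/-- The divergence transition matrix `p(x,y) / √(p(x) p(y))` with its top singular pair
`√p_X √p_Yᵀ` (singular value `1`) removed. -/
noncomputable def centeredDTM (p : X → Y → ℝ) : Matrix X Y ℝ :=
  of fun x y => p x y / (sqrtPX p x * sqrtPY p y) - sqrtPX p x * sqrtPY p y

lemma sum_sum_mul_fst (hX : ∀ x, 0 < ∑ y, p x y) (f : X → ℝ) :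
    ∑ x, ∑ y, p x y * f x = ∑ x, sqrtPX p x ^ 2 * f x := by
  simp only [← sum_mul, sqrtPX_sq hX]

lemma sum_sum_mul_snd (hY : ∀ y, 0 < ∑ x, p x y) (g : Y → ℝ) :
    ∑ x, ∑ y, p x y * g y = ∑ y, sqrtPY p y ^ 2 * g y := by
  rw [sum_comm]
  simp only [← sum_mul, sqrtPY_sq hY]

lemma sqrtPX_mul_dotProduct_sqrtPX_mul (hX : ∀ x, 0 < ∑ y, p x y) (f g : X → ℝ) :
    (sqrtPX p * f) ⬝ᵥ (sqrtPX p * g) = ∑ x, ∑ y, p x y * (f x * g x) := by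
  rw [sum_sum_mul_fst hX]
  exact sum_congr rfl fun x _ => by simp only [Pi.mul_apply]; ring

lemma sqrtPY_mul_dotProduct_sqrtPY_mul (hY : ∀ y, 0 < ∑ x, p x y) (f g : Y → ℝ) :
    (sqrtPY p * f) ⬝ᵥ (sqrtPY p * g) = ∑ x, ∑ y, p x y * (f y * g y) := by
  rw [sum_sum_mul_snd hY]
  exact sum_congr rfl fun y _ => by simp only [Pi.mul_apply]; ring

lemma sum_sqrtPX_sq (hX : ∀ x, 0 < ∑ y, p x y) (hsum : ∑ x, ∑ y, p x y = 1) :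
    ∑ x, sqrtPX p x ^ 2 = 1 := by
  simp only [sqrtPX_sq hX, hsum]

lemma sum_sqrtPY_sq (hY : ∀ y, 0 < ∑ x, p x y) (hsum : ∑ x, ∑ y, p x y = 1) :
    ∑ y, sqrtPY p y ^ 2 = 1 := by
  rw [← hsum, sum_comm]
  simp only [sqrtPY_sq hY]

lemma sqrtPX_mul_dotProduct_centeredDTM_mulVec (hX : ∀ x, 0 < ∑ y, p x y)
    (hY : ∀ y, 0 < ∑ x, p x y) (f : X → ℝ) (g : Y → ℝ) :
    (sqrtPX p * f) ⬝ᵥ centeredDTM p *ᵥ (sqrtPY p * g)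
      = ∑ x, ∑ y, p x y * f x * g y - (∑ x, ∑ y, p x y * f x) * ∑ x, ∑ y, p x y * g y := by
  have hterm : ∀ x y, sqrtPX p x * f x * (centeredDTM p x y * (sqrtPY p y * g y))
      = p x y * f x * g y - sqrtPX p x ^ 2 * f x * (sqrtPY p y ^ 2 * g y) := by
    intro x y
    have := (sqrtPX_pos hX x).ne'
    have := (sqrtPY_pos hY y).ne'
    simp only [centeredDTM, of_apply]
    field_simp
  rw [sum_sum_mul_fst hX, sum_sum_mul_snd hY, sum_mul_sum]
  simp only [dotProduct, mulVec, Pi.mul_apply, mul_sum, hterm, sum_sub_distrib]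

lemma centeredDTM_mulVec_sqrtPY (hX : ∀ x, 0 < ∑ y, p x y) (hY : ∀ y, 0 < ∑ x, p x y)
    (hsum : ∑ x, ∑ y, p x y = 1) : centeredDTM p *ᵥ sqrtPY p = 0 := by
  ext x
  have hu := (sqrtPX_pos hX x).ne'
  have hterm : ∀ y, centeredDTM p x y * sqrtPY p y
      = p x y / sqrtPX p x - sqrtPX p x * sqrtPY p y ^ 2 := by
    intro y
    have := (sqrtPY_pos hY y).ne'
    simp only [centeredDTM, of_apply]
    field_simp
  simp only [mulVec, dotProduct, hterm, sum_sub_distrib, ← sum_div, ← mul_sum,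
    sum_sqrtPY_sq hY hsum, ← sqrtPX_sq hX x, Pi.zero_apply]
  field_simp
  ring

lemma sqrtPX_vecMul_centeredDTM (hX : ∀ x, 0 < ∑ y, p x y) (hY : ∀ y, 0 < ∑ x, p x y)
    (hsum : ∑ x, ∑ y, p x y = 1) : sqrtPX p ᵥ* centeredDTM p = 0 := by
  ext y
  have hv := (sqrtPY_pos hY y).ne'
  have hterm : ∀ x, sqrtPX p x * centeredDTM p x y
      = p x y / sqrtPY p y - sqrtPY p y * sqrtPX p x ^ 2 := by
    intro x
    have := (sqrtPX_pos hX x).ne'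
    simp only [centeredDTM, of_apply]
    field_simp
  simp only [vecMul, dotProduct, hterm, sum_sub_distrib, ← sum_div, ← mul_sum,
    sum_sqrtPX_sq hX hsum, ← sqrtPY_sq hY y, Pi.zero_apply]
  field_simp
  ring

lemma sum_centeredDTM_sq (hX : ∀ x, 0 < ∑ y, p x y) (hY : ∀ y, 0 < ∑ x, p x y)
    (hsum : ∑ x, ∑ y, p x y = 1) :
    ∑ x, ∑ y, centeredDTM p x y ^ 2
      = ∑ x, ∑ y, (p x y) ^ 2 / ((∑ y', p x y') * (∑ x', p x' y)) - 1 := by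
  have hterm : ∀ x y, centeredDTM p x y ^ 2
      = p x y ^ 2 / ((∑ y', p x y') * (∑ x', p x' y)) - 2 * p x y
        + sqrtPX p x ^ 2 * sqrtPY p y ^ 2 := by
    intro x y
    have := (sqrtPX_pos hX x).ne'
    have := (sqrtPY_pos hY y).ne'
    rw [← sqrtPX_sq hX, ← sqrtPY_sq hY]
    simp only [centeredDTM, of_apply]
    field_simp
    ring
  simp only [hterm, sum_add_distrib, sum_sub_distrib, ← mul_sum, ← sum_mul, hsum,
    sum_sqrtPX_sq hX hsum, sum_sqrtPY_sq hY hsum]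
  ring

end DTM

section Witsenhausen

variable {X Y : Type*} [Fintype X] [Fintype Y] {p : X → Y → ℝ}

def corrSet (p : X → Y → ℝ) : Set ℝ :=
  {r | ∃ φ : X → ℝ, ∃ ψ : Y → ℝ, φ ⬝ᵥ φ = 1 ∧ ψ ⬝ᵥ ψ = 1 ∧
    sqrtPX p ⬝ᵥ φ = 0 ∧ sqrtPY p ⬝ᵥ ψ = 0 ∧ r = φ ⬝ᵥ centeredDTM p *ᵥ ψ}

lemma maxCorr_eq_sSup_corrSet (hX : ∀ x, 0 < ∑ y, p x y) (hY : ∀ y, 0 < ∑ x, p x y) :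
    maxCorr p = sSup (corrSet p) := by
  have hmeanX (f : X → ℝ) : sqrtPX p ⬝ᵥ (sqrtPX p * f) = ∑ x, ∑ y, p x y * f x := by
    simpa using sqrtPX_mul_dotProduct_sqrtPX_mul hX 1 f
  have hmeanY (g : Y → ℝ) : sqrtPY p ⬝ᵥ (sqrtPY p * g) = ∑ x, ∑ y, p x y * g y := by
    simpa using sqrtPY_mul_dotProduct_sqrtPY_mul hY 1 g
  unfold maxCorr
  congr 1
  ext r
  constructor
  · rintro ⟨f, g, hf, hg, hf2, hg2, rfl⟩
    refine ⟨sqrtPX p * f, sqrtPY p * g, ?_, ?_, hmeanX f ▸ hf, hmeanY g ▸ hg, ?_⟩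
    · simpa [sqrtPX_mul_dotProduct_sqrtPX_mul hX, sq] using hf2
    · simpa [sqrtPY_mul_dotProduct_sqrtPY_mul hY, sq] using hg2
    · rw [sqrtPX_mul_dotProduct_centeredDTM_mulVec hX hY, hf, zero_mul, sub_zero]
  · rintro ⟨φ, ψ, hφ, hψ, hφ0, hψ0, rfl⟩
    obtain ⟨f, rfl⟩ : ∃ f, sqrtPX p * f = φ :=
      ⟨φ / sqrtPX p, funext fun x => mul_div_cancel₀ _ (sqrtPX_pos hX x).ne'⟩
    obtain ⟨g, rfl⟩ : ∃ g, sqrtPY p * g = ψ :=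
      ⟨ψ / sqrtPY p, funext fun y => mul_div_cancel₀ _ (sqrtPY_pos hY y).ne'⟩
    refine ⟨f, g, hmeanX f ▸ hφ0, hmeanY g ▸ hψ0, ?_, ?_, ?_⟩
    · simpa [sqrtPX_mul_dotProduct_sqrtPX_mul hX, sq] using hφ
    · simpa [sqrtPY_mul_dotProduct_sqrtPY_mul hY, sq] using hψ
    · rw [sqrtPX_mul_dotProduct_centeredDTM_mulVec hX hY, ← hmeanX, hφ0, zero_mul, sub_zero]

lemma sq_le_of_mem_corrSet {r : ℝ} (hr : r ∈ corrSet p) :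
    r ^ 2 ≤ ∑ x, ∑ y, centeredDTM p x y ^ 2 := by
  obtain ⟨φ, ψ, hφ, hψ, -, -, rfl⟩ := hr
  exact sq_dotProduct_mulVec_le_sum_sq _ hφ hψ

lemma maxCorr_sq_le_sum_sq (hX : ∀ x, 0 < ∑ y, p x y) (hY : ∀ y, 0 < ∑ x, p x y) :
    maxCorr p ^ 2 ≤ ∑ x, ∑ y, centeredDTM p x y ^ 2 := by
  rw [maxCorr_eq_sSup_corrSet hX hY]
  exact sq_sSup_le_of_forall_sq_le (by positivity) fun r => sq_le_of_mem_corrSet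

lemma mulVec_dotProduct_le_maxCorr_sq_of_orthogonal (hX : ∀ x, 0 < ∑ y, p x y)
    (hY : ∀ y, 0 < ∑ x, p x y) (hsum : ∑ x, ∑ y, p x y = 1) {ψ : Y → ℝ} (hψ : ψ ⬝ᵥ ψ = 1)
    (hψ0 : sqrtPY p ⬝ᵥ ψ = 0) :
    centeredDTM p *ᵥ ψ ⬝ᵥ centeredDTM p *ᵥ ψ ≤ maxCorr p ^ 2 := by
  set w := centeredDTM p *ᵥ ψ
  rcases eq_or_ne w 0 with hw | hw
  · rw [hw, dotProduct_zero]
    positivity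
  have hpos := dotProduct_self_pos hw
  set s := √(w ⬝ᵥ w)
  have hmem : s ∈ corrSet p := by
    refine ⟨s⁻¹ • w, ψ, dotProduct_inv_sqrt_smul_self hw, hψ, ?_, hψ0, ?_⟩
    · rw [dotProduct_smul, dotProduct_mulVec, sqrtPX_vecMul_centeredDTM hX hY hsum,
        zero_dotProduct, smul_zero]
    · rw [smul_dotProduct, smul_eq_mul, ← Real.mul_self_sqrt hpos.le,
        inv_mul_cancel_left₀ (Real.sqrt_pos.2 hpos).ne']
  have hs : s ≤ maxCorr p := by
    rw [maxCorr_eq_sSup_corrSet hX hY]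
    exact le_csSup ⟨_, fun r hr => Real.le_sqrt_of_sq_le (sq_le_of_mem_corrSet hr)⟩ hmem
  calc w ⬝ᵥ w = s ^ 2 := (Real.sq_sqrt hpos.le).symm
    _ ≤ maxCorr p ^ 2 := pow_le_pow_left₀ (Real.sqrt_nonneg _) hs 2

lemma mulVec_dotProduct_le_maxCorr_sq (hX : ∀ x, 0 < ∑ y, p x y) (hY : ∀ y, 0 < ∑ x, p x y)
    (hsum : ∑ x, ∑ y, p x y = 1) {ψ : Y → ℝ} (hψ : ψ ⬝ᵥ ψ = 1) :
    centeredDTM p *ᵥ ψ ⬝ᵥ centeredDTM p *ᵥ ψ ≤ maxCorr p ^ 2 :=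
  mulVec_dotProduct_le_of_forall_orthogonal _
    (by simpa [dotProduct, sq] using sum_sqrtPY_sq hY hsum)
    (centeredDTM_mulVec_sqrtPY hX hY hsum) (sq_nonneg _)
    (fun _ => mulVec_dotProduct_le_maxCorr_sq_of_orthogonal hX hY hsum) hψ

lemma rank_centeredDTM_lt_min (hX : ∀ x, 0 < ∑ y, p x y) (hY : ∀ y, 0 < ∑ x, p x y)
    (hsum : ∑ x, ∑ y, p x y = 1) :
    (centeredDTM p).rank < min (Fintype.card X) (Fintype.card Y) := by
  have hu : sqrtPX p ≠ 0 := fun h => by simpa [h] using sum_sqrtPX_sq hX hsum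
  have hv : sqrtPY p ≠ 0 := fun h => by simpa [h] using sum_sqrtPY_sq hY hsum
  refine lt_min ?_
    (rank_lt_card_width_of_mulVec_eq_zero _ hv (centeredDTM_mulVec_sqrtPY hX hY hsum))
  rw [← rank_transpose]
  exact rank_lt_card_width_of_mulVec_eq_zero _ hu
    (by rw [mulVec_transpose, sqrtPX_vecMul_centeredDTM hX hY hsum])

end Witsenhausen

theorem stmt1_general {X Y : Type*} [Fintype X] [Fintype Y]
    (p : X → Y → ℝ) (hsum : ∑ x, ∑ y, p x y = 1)
    (hX : ∀ x, 0 < ∑ y, p x y) (hY : ∀ y, 0 < ∑ x, p x y) :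
    (∑ x, ∑ y, (p x y) ^ 2 / ((∑ y', p x y') * (∑ x', p x' y)) - 1) /
        (((min (Fintype.card X) (Fintype.card Y) : ℕ) : ℝ) - 1) ≤ (maxCorr p) ^ 2 ∧
    (maxCorr p) ^ 2 ≤ ∑ x, ∑ y, (p x y) ^ 2 / ((∑ y', p x y') * (∑ x', p x' y)) - 1 := by
  rw [← sum_centeredDTM_sq hX hY hsum]
  refine ⟨?_, maxCorr_sq_le_sum_sq hX hY⟩
  have hrank :
      ((centeredDTM p).rank : ℝ) ≤ ((min (Fintype.card X) (Fintype.card Y) : ℕ) : ℝ) - 1 := by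
    rw [le_sub_iff_add_le]
    exact_mod_cast rank_centeredDTM_lt_min hX hY hsum
  refine div_le_of_le_mul₀ ((Nat.cast_nonneg _).trans hrank) (sq_nonneg _) ?_
  calc _ ≤ (centeredDTM p).rank * maxCorr p ^ 2 :=
        sum_sq_le_rank_mul _ fun _ => mulVec_dotProduct_le_maxCorr_sq hX hY hsum
    _ ≤ maxCorr p ^ 2 * _ := by rw [mul_comm]; gcongr

theorem stmt1 {X Y : Type*} [Fintype X] [Fintype Y]
    (p : X → Y → ℝ) (hp : ∀ x y, 0 ≤ p x y) (hsum : ∑ x, ∑ y, p x y = 1)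
    (hX : ∀ x, 0 < ∑ y, p x y) (hY : ∀ y, 0 < ∑ x, p x y)
    (hcX : 2 ≤ Fintype.card X) (hcY : 2 ≤ Fintype.card Y) :
    (∑ x, ∑ y, (p x y) ^ 2 / ((∑ y', p x y') * (∑ x', p x' y)) - 1) /
        (((min (Fintype.card X) (Fintype.card Y) : ℕ) : ℝ) - 1) ≤ (maxCorr p) ^ 2 ∧
    (maxCorr p) ^ 2 ≤ ∑ x, ∑ y, (p x y) ^ 2 / ((∑ y', p x y') * (∑ x', p x' y)) - 1 :=
  stmt1_general p hsum hX hY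
end

section
/- Consider a (possibly probabilistic) cipher with message M uniform on [1:2ⁿ], key K uniform on [1:2ˢ] independent of M, local randomness W independent of (M,K), ciphertext C = E(K,M,W), and decryption satisfying D(k, E(k,m,w)) = m for all k,m,w. If ρ_m(M;C) ≤ ρ then s ≥ log₂(1/(ρ² + 2⁻ⁿ)). -/
/-!
Test the maximal correlation against the centred indicator of a message `m₀` and the
likelihood-ratio deviation `c ↦ (p(m₀, c) - p(m₀) p(c)) / p(c)`: this bounds the contribution of
each row to `χ²(p ‖ p_M ⊗ p_C)` and gives `χ² ≤ (2ⁿ - 1) ρ²`. Conversely, a ciphertext `c` can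
only come from the at most `2ˢ` messages `D(k, c)`, so Cauchy–Schwarz on each column gives
`χ² ≥ 2ⁿ⁻ˢ - 1`. Comparing the two bounds yields `2⁻ˢ ≤ ρ² + 2⁻ⁿ`.
-/

open BigOperators Finset
open scoped Classical

section MaximalCorrelation

variable {X Y : Type*} [Fintype X] [Fintype Y] (p : X → Y → ℝ)

def fstMarginal (x : X) : ℝ := ∑ y, p x y

def sndMarginal (y : Y) : ℝ := ∑ x, p x y

/-- `χ²(p ‖ p_X ⊗ p_Y)`; a term with a vanishing marginal counts as `0` since `a / 0 = 0`. -/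
noncomputable def chiSqInfo : ℝ :=
  ∑ x, ∑ y, (p x y - fstMarginal p x * sndMarginal p y) ^ 2 / (fstMarginal p x * sndMarginal p y)

lemma sum_sndMarginal : ∑ y, sndMarginal p y = ∑ x, fstMarginal p x := sum_comm

lemma sum_sum_mul_eq_sum_fstMarginal_mul (f : X → ℝ) :
    ∑ x, ∑ y, p x y * f x = ∑ x, fstMarginal p x * f x := by
  simp only [fstMarginal, sum_mul]

lemma sum_sum_mul_eq_sum_sndMarginal_mul (g : Y → ℝ) :
    ∑ x, ∑ y, p x y * g y = ∑ y, sndMarginal p y * g y := by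
  rw [sum_comm]
  simp only [sndMarginal, sum_mul]

variable {p}

lemma sq_sum_sum_mul_mul_le (hp : ∀ x y, 0 ≤ p x y) (f : X → ℝ) (g : Y → ℝ) :
    (∑ x, ∑ y, p x y * f x * g y) ^ 2 ≤
      (∑ x, ∑ y, p x y * f x ^ 2) * ∑ x, ∑ y, p x y * g y ^ 2 := by
  simp only [← Fintype.sum_prod_type']
  exact sum_sq_le_sum_mul_sum_of_sq_le_mul _ (fun z _ => mul_nonneg (hp _ _) (sq_nonneg _))
    (fun z _ => mul_nonneg (hp _ _) (sq_nonneg _)) (fun z _ => le_of_eq (by ring))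

lemma le_maxCorr (hp : ∀ x y, 0 ≤ p x y) {f : X → ℝ} {g : Y → ℝ}
    (hf : ∑ x, ∑ y, p x y * f x = 0) (hg : ∑ x, ∑ y, p x y * g y = 0)
    (hf2 : ∑ x, ∑ y, p x y * f x ^ 2 = 1) (hg2 : ∑ x, ∑ y, p x y * g y ^ 2 = 1) :
    ∑ x, ∑ y, p x y * f x * g y ≤ maxCorr p := by
  refine le_csSup ⟨1, ?_⟩ ⟨f, g, hf, hg, hf2, hg2, rfl⟩
  rintro r ⟨f, g, -, -, hf2, hg2, rfl⟩
  have := sq_sum_sum_mul_mul_le hp f g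
  rw [hf2, hg2, one_mul, sq_le_one_iff_abs_le_one] at this
  exact (abs_le.mp this).2

lemma maxCorr_nonneg (hp : ∀ x y, 0 ≤ p x y) : 0 ≤ maxCorr p := by
  by_cases h : ∃ f : X → ℝ, ∃ g : Y → ℝ, ∑ x, ∑ y, p x y * f x = 0 ∧
      ∑ x, ∑ y, p x y * g y = 0 ∧ ∑ x, ∑ y, p x y * f x ^ 2 = 1 ∧
      ∑ x, ∑ y, p x y * g y ^ 2 = 1
  · obtain ⟨f, g, hf, hg, hf2, hg2⟩ := h
    have hneg := le_maxCorr (g := -g) hp hf (by simp [hg]) hf2 (by simp [hg2])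
    have hpos := le_maxCorr hp hf hg hf2 hg2
    simp only [Pi.neg_apply, mul_neg, sum_neg_distrib] at hneg
    linarith
  · exact Real.sSup_nonneg fun r ⟨f, g, hf, hg, hf2, hg2, _⟩ =>
      absurd ⟨f, g, hf, hg, hf2, hg2⟩ h

/-- Normalising `f` and `g` to unit second moment; in the degenerate case the left side vanishes
by Cauchy–Schwarz. -/
lemma sum_sum_mul_mul_le_maxCorr_mul_sqrt (hp : ∀ x y, 0 ≤ p x y) {f : X → ℝ} {g : Y → ℝ}
    (hf : ∑ x, ∑ y, p x y * f x = 0) (hg : ∑ x, ∑ y, p x y * g y = 0) :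
    ∑ x, ∑ y, p x y * f x * g y ≤
      maxCorr p * √((∑ x, ∑ y, p x y * f x ^ 2) * ∑ x, ∑ y, p x y * g y ^ 2) := by
  have hcs := sq_sum_sum_mul_mul_le hp f g
  set a := ∑ x, ∑ y, p x y * f x ^ 2
  set b := ∑ x, ∑ y, p x y * g y ^ 2
  have ha : 0 ≤ a := sum_nonneg fun x _ => sum_nonneg fun y _ => mul_nonneg (hp x y) (sq_nonneg _)
  have hb : 0 ≤ b := sum_nonneg fun x _ => sum_nonneg fun y _ => mul_nonneg (hp x y) (sq_nonneg _)
  rcases (mul_nonneg ha hb).eq_or_lt with hab | hab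
  · rw [← hab, Real.sqrt_zero, mul_zero]
    exact (pow_eq_zero_iff two_ne_zero).1 (le_antisymm (hab ▸ hcs) (sq_nonneg _)) |>.le
  have ha0 : 0 < a := pos_of_mul_pos_left hab hb
  have hb0 : 0 < b := pos_of_mul_pos_right hab ha
  have key := le_maxCorr (f := fun x => f x / √a) (g := fun y => g y / √b) hp
    (by simp only [mul_div_assoc', ← sum_div, hf, zero_div])
    (by simp only [mul_div_assoc', ← sum_div, hg, zero_div])
    (by simp only [div_pow, Real.sq_sqrt ha, mul_div_assoc', ← sum_div]; exact div_self ha0.ne')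
    (by simp only [div_pow, Real.sq_sqrt hb, mul_div_assoc', ← sum_div]; exact div_self hb0.ne')
  rw [← div_le_iff₀ (Real.sqrt_pos.2 hab), Real.sqrt_mul ha]
  refine (le_of_eq ?_).trans key
  rw [sum_div]
  refine sum_congr rfl fun x _ => ?_
  rw [sum_div]
  exact sum_congr rfl fun y _ => by ring

end MaximalCorrelation

lemma sq_sum_le_mul_sum_sq_of_card_support_le {X : Type*} [Fintype X] (f : X → ℝ) {K : ℕ}
    (hK : #{x | f x ≠ 0} ≤ K) : (∑ x, f x) ^ 2 ≤ K * ∑ x, f x ^ 2 := by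
  calc (∑ x, f x) ^ 2 = (∑ x with f x ≠ 0, f x) ^ 2 := by rw [sum_filter_ne_zero]
    _ ≤ #{x | f x ≠ 0} * ∑ x with f x ≠ 0, f x ^ 2 := sq_sum_le_card_mul_sum_sq
    _ ≤ K * ∑ x, f x ^ 2 :=
      mul_le_mul (by exact_mod_cast hK)
        (sum_le_sum_of_subset_of_nonneg (filter_subset _ _) fun x _ _ => sq_nonneg _)
        (sum_nonneg fun x _ => sq_nonneg _) (Nat.cast_nonneg _)

/-- For a column `v` of a joint law whose first marginal is uniform, the right side is the
column's contribution to `chiSqInfo`. -/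
lemma mul_sum_le_sum_sq_div_of_card_support_le {X : Type*} [Fintype X] (v : X → ℝ)
    (hv : ∀ x, 0 ≤ v x) {K : ℕ} (hK : #{x | v x ≠ 0} ≤ K) :
    ((Fintype.card X : ℝ) / K - 1) * ∑ x, v x ≤
      ∑ x, (v x - (Fintype.card X : ℝ)⁻¹ * ∑ x, v x) ^ 2 /
        ((Fintype.card X : ℝ)⁻¹ * ∑ x, v x) := by
  set N := (Fintype.card X : ℝ)
  set Q := ∑ x, v x
  have hQ0 : 0 ≤ Q := sum_nonneg fun x _ => hv x
  rcases hQ0.eq_or_lt with hQ | hQ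
  · rw [← hQ]
    simp
  obtain ⟨x₀, -, hx₀⟩ := exists_ne_zero_of_sum_ne_zero hQ.ne'
  have hN : 0 < N := Nat.cast_pos.2 (Fintype.card_pos_iff.2 ⟨x₀⟩)
  have hK0 : (0 : ℝ) < K := Nat.cast_pos.2 ((card_pos.2 ⟨x₀, by simpa using hx₀⟩).trans_le hK)
  have hvar : ∑ x, (v x - N⁻¹ * Q) ^ 2 = ∑ x, v x ^ 2 - N⁻¹ * Q ^ 2 := by
    simp only [sub_sq, sum_add_distrib, sum_sub_distrib, ← sum_mul, ← mul_sum, sum_const,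
      card_univ, nsmul_eq_mul]
    field_simp
    ring
  have hcs : Q ^ 2 / K ≤ ∑ x, v x ^ 2 :=
    div_le_of_le_mul₀ hK0.le (sum_nonneg fun x _ => sq_nonneg _)
      (by simpa [mul_comm] using sq_sum_le_mul_sum_sq_of_card_support_le v hK)
  rw [← sum_div, hvar, le_div_iff₀ (by positivity)]
  calc (N / K - 1) * Q * (N⁻¹ * Q) = Q ^ 2 / K - N⁻¹ * Q ^ 2 := by field_simp
    _ ≤ _ := by linarith

section ChiSq

variable {X Y : Type*} [Fintype X] [Fintype Y] {p : X → Y → ℝ}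

/-- Test `maxCorr` against the centred indicator of `x₀` and the likelihood-ratio deviation
`y ↦ (p x₀ y - a q y) / q y`: their correlation is the left side `T`, and their second moments
are `a (1 - a)` and `T`. -/
lemma sum_sq_div_sndMarginal_le (hp : ∀ x y, 0 ≤ p x y) (hp1 : ∑ x, fstMarginal p x = 1)
    (x₀ : X) :
    ∑ y, (p x₀ y - fstMarginal p x₀ * sndMarginal p y) ^ 2 / sndMarginal p y ≤
      maxCorr p ^ 2 * (fstMarginal p x₀ * (1 - fstMarginal p x₀)) := by
  set a := fstMarginal p x₀
  set q := sndMarginal p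
  set u : Y → ℝ := fun y => p x₀ y - a * q y
  set T := ∑ y, u y ^ 2 / q y
  let f : X → ℝ := fun x => (if x = x₀ then 1 else 0) - a
  let g : Y → ℝ := fun y => u y / q y
  have hqg : ∀ y, q y * g y = u y := fun y => by
    refine mul_div_cancel_of_imp' fun hq => ?_
    have : p x₀ y = 0 := le_antisymm
      (hq ▸ single_le_sum (fun x _ => hp x y) (mem_univ x₀)) (hp x₀ y)
    simp [u, this, hq]
  have hpf : ∀ y, ∑ x, p x y * f x = u y := fun y => by
    simp only [f, mul_sub, mul_ite, mul_one, mul_zero, sum_sub_distrib, sum_ite_eq', mem_univ,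
      if_true, ← sum_mul, u, q, sndMarginal, mul_comm a]
  have hf : ∑ x, ∑ y, p x y * f x = 0 := by
    rw [sum_sum_mul_eq_sum_fstMarginal_mul]
    simp only [f, mul_sub, mul_ite, mul_one, mul_zero, sum_sub_distrib, sum_ite_eq', mem_univ,
      if_true, ← sum_mul, hp1, one_mul]
    exact sub_self a
  have hg : ∑ x, ∑ y, p x y * g y = 0 := by
    simp only [sum_sum_mul_eq_sum_sndMarginal_mul, hqg, u, sum_sub_distrib, ← mul_sum, q,
      sum_sndMarginal, hp1, mul_one]
    exact sub_self a
  have hf2 : ∑ x, ∑ y, p x y * f x ^ 2 = a * (1 - a) := by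
    have hfsq : ∀ x, f x ^ 2 = (if x = x₀ then 1 - 2 * a else 0) + a ^ 2 := fun x => by
      simp only [f]
      split_ifs <;> ring
    rw [sum_sum_mul_eq_sum_fstMarginal_mul]
    simp only [hfsq, mul_add, mul_ite, mul_zero, sum_add_distrib, sum_ite_eq',
      mem_univ, if_true, ← sum_mul, hp1]
    ring
  have hg2 : ∑ x, ∑ y, p x y * g y ^ 2 = T := by
    rw [sum_sum_mul_eq_sum_sndMarginal_mul]
    refine sum_congr rfl fun y _ => ?_
    rw [sq, ← mul_assoc, hqg, mul_div_assoc', sq]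
  have hfg : ∑ x, ∑ y, p x y * f x * g y = T := by
    rw [sum_comm]
    refine sum_congr rfl fun y _ => ?_
    rw [← sum_mul, hpf, mul_div_assoc', sq]
  have key := sum_sum_mul_mul_le_maxCorr_mul_sqrt hp hf hg
  rw [hfg, hf2, hg2] at key
  have hT : 0 ≤ T := hg2 ▸ sum_nonneg fun x _ => sum_nonneg fun y _ =>
    mul_nonneg (hp x y) (sq_nonneg _)
  have hβ : 0 ≤ a * (1 - a) := hf2 ▸ sum_nonneg fun x _ => sum_nonneg fun y _ =>
    mul_nonneg (hp x y) (sq_nonneg _)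
  rcases hT.eq_or_lt with hT0 | hT0
  · rw [← hT0]
    positivity
  have hsq : T * T ≤ maxCorr p ^ 2 * (a * (1 - a)) * T :=
    calc T * T ≤ (maxCorr p * √(a * (1 - a) * T)) ^ 2 := by rw [← sq]; gcongr
      _ = _ := by rw [mul_pow, Real.sq_sqrt (mul_nonneg hβ hT)]; ring
  exact le_of_mul_le_mul_right hsq hT0

theorem chiSqInfo_le_mul_maxCorr_sq (hp : ∀ x y, 0 ≤ p x y) (hp1 : ∑ x, fstMarginal p x = 1) :
    chiSqInfo p ≤ (Fintype.card X - 1) * maxCorr p ^ 2 := by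
  have hrow : ∀ x, ∑ y, (p x y - fstMarginal p x * sndMarginal p y) ^ 2 /
      (fstMarginal p x * sndMarginal p y) ≤ maxCorr p ^ 2 * (1 - fstMarginal p x) := fun x => by
    have ha : 0 ≤ fstMarginal p x := sum_nonneg fun y _ => hp x y
    have ha1 : fstMarginal p x ≤ 1 :=
      hp1 ▸ single_le_sum (fun x _ => sum_nonneg fun y _ => hp x y) (mem_univ x)
    simp only [div_mul_eq_div_div_swap, ← sum_div]
    refine div_le_of_le_mul₀ ha (by nlinarith [sq_nonneg (maxCorr p)]) ?_
    exact (sum_sq_div_sndMarginal_le hp hp1 x).trans_eq (by ring)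
  calc chiSqInfo p ≤ ∑ x, maxCorr p ^ 2 * (1 - fstMarginal p x) := sum_le_sum fun x _ => hrow x
    _ = (Fintype.card X - 1) * maxCorr p ^ 2 := by
      rw [← mul_sum, sum_sub_distrib, hp1, sum_const, card_univ, nsmul_one]
      ring

theorem sub_one_le_chiSqInfo_of_card_support_le [Nonempty X] (hp : ∀ x y, 0 ≤ p x y)
    (hrow : ∀ x, fstMarginal p x = (Fintype.card X : ℝ)⁻¹) {K : ℕ}
    (hK : ∀ y, #{x | p x y ≠ 0} ≤ K) :
    (Fintype.card X : ℝ) / K - 1 ≤ chiSqInfo p := by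
  have hN : (Fintype.card X : ℝ) ≠ 0 := Nat.cast_ne_zero.2 Fintype.card_ne_zero
  calc (Fintype.card X / K - 1 : ℝ) = ∑ y, (Fintype.card X / K - 1) * sndMarginal p y := by
        rw [← mul_sum, sum_sndMarginal]
        simp [hrow, hN]
    _ ≤ chiSqInfo p := by
      rw [chiSqInfo, sum_comm]
      simp only [hrow]
      exact sum_le_sum fun y _ =>
        mul_sum_le_sum_sq_div_of_card_support_le (p · y) (hp · y) (hK y)

end ChiSq

theorem inv_le_maxCorr_sq_add_inv {X Y : Type*} [Fintype X] [Fintype Y] [Nonempty X]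
    {p : X → Y → ℝ} (hp : ∀ x y, 0 ≤ p x y)
    (hrow : ∀ x, fstMarginal p x = (Fintype.card X : ℝ)⁻¹) {K : ℕ}
    (hK : ∀ y, #{x | p x y ≠ 0} ≤ K) :
    (K : ℝ)⁻¹ ≤ maxCorr p ^ 2 + (Fintype.card X : ℝ)⁻¹ := by
  set N := (Fintype.card X : ℝ)
  have hN : 0 < N := Nat.cast_pos.2 Fintype.card_pos
  rcases K.eq_zero_or_pos with rfl | hK0
  · rw [Nat.cast_zero, inv_zero]
    positivity
  have hp1 : ∑ x, fstMarginal p x = 1 := by simp [hrow, N, hN.ne']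
  have hχ := (sub_one_le_chiSqInfo_of_card_support_le hp hrow hK).trans
    (chiSqInfo_le_mul_maxCorr_sq hp hp1)
  calc (K : ℝ)⁻¹ = (N / K - 1) / N + N⁻¹ := by field_simp; ring
    _ ≤ (N - 1) * maxCorr p ^ 2 / N + N⁻¹ := by gcongr
    _ ≤ maxCorr p ^ 2 + N⁻¹ := by
      gcongr
      exact div_le_of_le_mul₀ hN.le (sq_nonneg _) (by nlinarith [sq_nonneg (maxCorr p)])

section Cipher

variable {W C : Type*} [Fintype W] {n s : ℕ} {pW : W → ℝ}
  {E : Fin (2 ^ s) → Fin (2 ^ n) → W → C}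

noncomputable def cipherJoint (pW : W → ℝ) (E : Fin (2 ^ s) → Fin (2 ^ n) → W → C) :
    Fin (2 ^ n) → C → ℝ := fun m c =>
  ∑ k, ∑ w, ((2 ^ n : ℝ))⁻¹ * ((2 ^ s : ℝ))⁻¹ * pW w * (if E k m w = c then 1 else 0)

lemma cipherJoint_nonneg (hpW : ∀ w, 0 ≤ pW w) (m : Fin (2 ^ n)) (c : C) :
    0 ≤ cipherJoint pW E m c :=
  sum_nonneg fun k _ => sum_nonneg fun w _ => mul_nonneg (by have := hpW w; positivity)
    (by split_ifs <;> norm_num)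

lemma fstMarginal_cipherJoint [Fintype C] (hpW1 : ∑ w, pW w = 1) (m : Fin (2 ^ n)) :
    fstMarginal (cipherJoint pW E) m = (Fintype.card (Fin (2 ^ n)) : ℝ)⁻¹ := by
  simp only [fstMarginal, cipherJoint]
  rw [sum_comm]
  simp only [sum_comm (γ := C), ← mul_sum, sum_ite_eq, mem_univ, if_true, mul_one, hpW1]
  simp

lemma card_support_cipherJoint_le {D : Fin (2 ^ s) → C → Fin (2 ^ n)}
    (hD : ∀ k m w, D k (E k m w) = m) (c : C) :
    #{m | cipherJoint pW E m c ≠ 0} ≤ 2 ^ s := by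
  refine (card_le_card fun m hm => ?_).trans ((card_image_le (s := univ) (f := (D · c))).trans ?_)
  · obtain ⟨k, -, hk⟩ := exists_ne_zero_of_sum_ne_zero (mem_filter.1 hm).2
    obtain ⟨w, -, hw⟩ := exists_ne_zero_of_sum_ne_zero hk
    have hc : E k m w = c := by_contra fun h => hw (by simp [h])
    exact mem_image.2 ⟨k, mem_univ k, hc ▸ hD k m w⟩
  · simp

end Cipher

theorem stmt5 {W C : Type*} [Fintype W] [Fintype C] (n s : ℕ)
    (pW : W → ℝ) (hpW : ∀ w, 0 ≤ pW w) (hpW1 : ∑ w, pW w = 1)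
    (E : Fin (2 ^ s) → Fin (2 ^ n) → W → C) (D : Fin (2 ^ s) → C → Fin (2 ^ n))
    (hD : ∀ k m w, D k (E k m w) = m) (ρ : ℝ)
    (hρ : maxCorr (fun (m : Fin (2 ^ n)) (c : C) =>
      ∑ k, ∑ w, ((2 ^ n : ℝ))⁻¹ * ((2 ^ s : ℝ))⁻¹ * pW w *
        (if E k m w = c then 1 else 0)) ≤ ρ) :
    Real.logb 2 (1 / (ρ ^ 2 + ((2 ^ n : ℝ))⁻¹)) ≤ (s : ℝ) := by
  have hp := cipherJoint_nonneg (E := E) hpW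
  have key := inv_le_maxCorr_sq_add_inv hp (fstMarginal_cipherJoint hpW1)
    (card_support_cipherJoint_le (pW := pW) hD)
  have hρ2 : maxCorr (cipherJoint pW E) ^ 2 ≤ ρ ^ 2 :=
    pow_le_pow_left₀ (maxCorr_nonneg hp) hρ 2
  simp only [Fintype.card_fin, Nat.cast_pow, Nat.cast_ofNat] at key
  rw [Real.logb_le_iff_le_rpow one_lt_two (by positivity), Real.rpow_natCast,
    one_div_le (by positivity) (by positivity), one_div]
  linarith
end

section
/- For a binary additive stream cipher with message M uniform on {0,1}ⁿ, key K uniform on a finite key set 𝒦 independent of M, keystream generator g: 𝒦 → {0,1}ⁿ, and ciphertext C = M ⊕ g(K) (componentwise mod-2 addition), the maximal correlation is ρ_m(M;C) = max over nonzero v ∈ {0,1}ⁿ of | (1/|𝒦|) Σ_{k∈𝒦} (−1)^{⟨v, g(k)⟩} |, where ⟨v, g(k)⟩ = Σ_l v_l g_l(k). -/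
/-!
With `C = M + g K`, the correlation `E[f(M) G(C)]` is, in the Walsh basis `x ↦ (-1)^⟨w, x⟩`
of `𝔽₂ⁿ`, equal to `∑_w f̂(w) Ĝ(w) b(w)` with `b(w) = E[(-1)^⟨w, g K⟩]`: translating `G` by
`g k` multiplies `Ĝ(w)` by `(-1)^⟨w, g k⟩`, and Plancherel turns `∑ f h` into `∑ f̂ ĥ`.
A zero mean kills the `w = 0` term and unit variance means `∑ f̂² = 1` (Parseval), so
Cauchy–Schwarz bounds the correlation by `max_{w ≠ 0} |b(w)|`; the characters `f = χ_v`,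
`G = ±χ_v` attain `|b(v)|`.
-/

open BigOperators Finset
open scoped Classical

lemma zmod_two_eq_zero_or_eq_one : ∀ a : ZMod 2, a = 0 ∨ a = 1 := by decide

namespace Walsh

section Character

variable {ι : Type*} [Fintype ι]

noncomputable def walsh (v : ι → ZMod 2) : AddChar (ι → ZMod 2) ℝ where
  toFun x := if v ⬝ᵥ x = 0 then 1 else -1
  map_zero_eq_one' := by simp
  map_add_eq_mul' x y := by
    rw [dotProduct_add]
    rcases zmod_two_eq_zero_or_eq_one (v ⬝ᵥ x) with hx | hx <;>
      rcases zmod_two_eq_zero_or_eq_one (v ⬝ᵥ y) with hy | hy <;> simp +decide [hx, hy]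

lemma walsh_apply (v x : ι → ZMod 2) : walsh v x = if v ⬝ᵥ x = 0 then 1 else -1 := rfl

lemma walsh_comm (v x : ι → ZMod 2) : walsh v x = walsh x v := by
  rw [walsh_apply, walsh_apply, dotProduct_comm]

lemma walsh_add (v w x : ι → ZMod 2) : walsh (v + w) x = walsh v x * walsh w x := by
  rw [walsh_comm, AddChar.map_add_eq_mul, walsh_comm v, walsh_comm w]

lemma walsh_zero (x : ι → ZMod 2) : walsh 0 x = 1 := by
  simp [walsh_apply]

lemma walsh_mul_self (v x : ι → ZMod 2) : walsh v x * walsh v x = 1 := by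
  rw [walsh_apply]; split_ifs <;> norm_num

lemma walsh_eq_zero_iff {v : ι → ZMod 2} : walsh v = 0 ↔ v = 0 := by
  refine ⟨fun h => ?_, fun h => by ext x; simp [h, walsh_zero]⟩
  by_contra hv
  obtain ⟨i, hi⟩ := Function.ne_iff.mp hv
  have hvi : v i = 1 := (zmod_two_eq_zero_or_eq_one (v i)).resolve_left hi
  have := AddChar.eq_zero_iff.mp h (Pi.single i 1)
  norm_num [walsh_apply, hvi] at this

end Character

variable {ι : Type*} [Fintype ι] [DecidableEq ι]

lemma sum_walsh (v : ι → ZMod 2) :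
    ∑ x, walsh v x = if v = 0 then (Fintype.card (ι → ZMod 2) : ℝ) else 0 := by
  simp only [AddChar.sum_eq_ite, walsh_eq_zero_iff]

lemma sum_walsh_mul_walsh (v w : ι → ZMod 2) :
    ∑ x, walsh v x * walsh w x = if v = w then (Fintype.card (ι → ZMod 2) : ℝ) else 0 := by
  simp only [← walsh_add, sum_walsh, add_eq_zero_iff_eq_neg, ZModModule.neg_eq_self]

noncomputable def walshTransform (f : (ι → ZMod 2) → ℝ) (w : ι → ZMod 2) : ℝ :=
  (Fintype.card (ι → ZMod 2) : ℝ)⁻¹ * ∑ x, f x * walsh w x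

lemma walshTransform_zero (f : (ι → ZMod 2) → ℝ) :
    walshTransform f 0 = (Fintype.card (ι → ZMod 2) : ℝ)⁻¹ * ∑ x, f x := by
  simp [walshTransform, walsh_zero]

lemma walshTransform_walsh (v w : ι → ZMod 2) :
    walshTransform (walsh v) w = if v = w then 1 else 0 := by
  rw [walshTransform, sum_walsh_mul_walsh]
  split_ifs <;> simp

lemma walshTransform_comp_add_right (h : (ι → ZMod 2) → ℝ) (a w : ι → ZMod 2) :
    walshTransform (fun x => h (x + a)) w = walsh w a * walshTransform h w := by
  simp only [walshTransform]
  rw [← Equiv.sum_comp (Equiv.addRight a) (fun x => h x * walsh w x)]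
  simp only [mul_sum, Equiv.coe_addRight, AddChar.map_add_eq_mul]
  refine sum_congr rfl fun x _ => ?_
  linear_combination (-(Fintype.card (ι → ZMod 2) : ℝ)⁻¹ * h (x + a) * walsh w x) *
    walsh_mul_self w a

lemma sum_walshTransform_mul_walshTransform (f h : (ι → ZMod 2) → ℝ) :
    ∑ w, walshTransform f w * walshTransform h w =
      (Fintype.card (ι → ZMod 2) : ℝ)⁻¹ * ∑ x, f x * h x := by
  have horth (x y : ι → ZMod 2) : ∑ w, walsh w x * walsh w y =
      if x = y then (Fintype.card (ι → ZMod 2) : ℝ) else 0 := by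
    simp only [walsh_comm _ x, walsh_comm _ y, sum_walsh_mul_walsh]
  simp only [walshTransform]
  set N := (Fintype.card (ι → ZMod 2) : ℝ)
  have hN : N ≠ 0 := by positivity
  calc ∑ w, (N⁻¹ * ∑ x, f x * walsh w x) * (N⁻¹ * ∑ y, h y * walsh w y)
      = N⁻¹ * N⁻¹ * ∑ w, ∑ x, ∑ y, f x * h y * (walsh w x * walsh w y) := by
        rw [mul_sum]
        refine sum_congr rfl fun w _ => ?_
        rw [mul_mul_mul_comm, sum_mul_sum]
        simp only [mul_sum]
        exact sum_congr rfl fun x _ => sum_congr rfl fun y _ => by ring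
    _ = N⁻¹ * N⁻¹ * ∑ x, ∑ y, f x * h y * ∑ w, walsh w x * walsh w y := by
        simp only [mul_sum]
        rw [sum_comm]
        exact sum_congr rfl fun x _ => sum_comm
    _ = N⁻¹ * ∑ x, f x * h x := by
        simp only [horth, mul_ite, mul_zero, sum_ite_eq, mem_univ, if_true]
        rw [mul_sum, mul_sum]
        exact sum_congr rfl fun x _ => by field_simp

lemma walshTransform_const_mul (ε : ℝ) (f : (ι → ZMod 2) → ℝ) (w : ι → ZMod 2) :
    walshTransform (fun x => ε * f x) w = ε * walshTransform f w := by
  simp only [walshTransform, mul_sum]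
  exact sum_congr rfl fun x _ => by ring

lemma sum_sq_walshTransform (f : (ι → ZMod 2) → ℝ) :
    ∑ w, walshTransform f w ^ 2 = (Fintype.card (ι → ZMod 2) : ℝ)⁻¹ * ∑ x, f x ^ 2 := by
  simpa only [sq] using sum_walshTransform_mul_walshTransform f f

end Walsh

lemma exists_mem_sum_mul_mul_le_abs {α : Type*} [Fintype α] (s : Finset α) {a b q : α → ℝ}
    (ha : ∀ x ∉ s, a x = 0) (ha2 : ∑ x, a x ^ 2 = 1) (hb2 : ∑ x, b x ^ 2 = 1) :
    ∃ x ∈ s, ∑ y, a y * b y * q y ≤ |q x| := by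
  have hs : s.Nonempty := by
    by_contra hs
    rw [not_nonempty_iff_eq_empty] at hs
    simp [hs, ha] at ha2
  obtain ⟨x, hx, hmax⟩ := s.exists_max_image (fun y => |q y|) hs
  refine ⟨x, hx, ?_⟩
  have hterm (y : α) : a y * b y * q y ≤ |q x| * (|a y| * |b y|) := by
    by_cases hy : y ∈ s
    · calc a y * b y * q y ≤ |a y| * |b y| * |q y| := by
            rw [← abs_mul, ← abs_mul]; exact le_abs_self _
        _ ≤ |a y| * |b y| * |q x| :=
            mul_le_mul_of_nonneg_left (hmax y hy) (by positivity)
        _ = |q x| * (|a y| * |b y|) := by ring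
    · rw [ha y hy, zero_mul, zero_mul]
      positivity
  have hCS : ∑ y, |a y| * |b y| ≤ 1 := by
    simpa [ha2, hb2] using Real.sum_mul_le_sqrt_mul_sqrt univ (fun y => |a y|) (fun y => |b y|)
  calc ∑ y, a y * b y * q y ≤ ∑ y, |q x| * (|a y| * |b y|) := sum_le_sum fun y _ => hterm y
    _ = |q x| * ∑ y, |a y| * |b y| := (mul_sum ..).symm
    _ ≤ |q x| := mul_le_of_le_one_right (abs_nonneg _) hCS

namespace StreamCipher

open Walsh

variable {ι K : Type*} [Fintype ι] [DecidableEq ι] [Fintype K] (g : K → (ι → ZMod 2))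

/-- Joint law of the plaintext `M` and the ciphertext `C = M + g K`, for `M` uniform and `K`
uniform and independent of `M`. -/
noncomputable def cipherPmf (m c : ι → ZMod 2) : ℝ :=
  ((Fintype.card (ι → ZMod 2) : ℝ))⁻¹ * ((Fintype.card K : ℝ))⁻¹ *
    ((univ.filter fun k => m + g k = c).card : ℝ)

noncomputable def keystreamBias (v : ι → ZMod 2) : ℝ :=
  (Fintype.card K : ℝ)⁻¹ * ∑ k, walsh v (g k)

lemma sum_cipherPmf_mul (F : (ι → ZMod 2) → (ι → ZMod 2) → ℝ) :
    ∑ m, ∑ c, cipherPmf g m c * F m c =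
      (Fintype.card (ι → ZMod 2) : ℝ)⁻¹ * (Fintype.card K : ℝ)⁻¹ *
        ∑ m, ∑ k, F m (m + g k) := by
  have hfiber (m : ι → ZMod 2) :
      ∑ c, ((univ.filter fun k => m + g k = c).card : ℝ) * F m c = ∑ k, F m (m + g k) := by
    simp only [natCast_card_filter, sum_mul, ite_mul, one_mul, zero_mul]
    rw [sum_comm]
    simp
  simp only [cipherPmf, mul_assoc, ← mul_sum, hfiber]

lemma sum_cipherPmf_mul_mul (f G : (ι → ZMod 2) → ℝ) :
    ∑ m, ∑ c, cipherPmf g m c * f m * G c =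
      ∑ w, walshTransform f w * walshTransform G w * keystreamBias g w := by
  have hk (k : K) : (Fintype.card (ι → ZMod 2) : ℝ)⁻¹ * ∑ m, f m * G (m + g k) =
      ∑ w, walshTransform f w * walshTransform G w * walsh w (g k) := by
    rw [← sum_walshTransform_mul_walshTransform]
    refine sum_congr rfl fun w _ => ?_
    rw [walshTransform_comp_add_right]
    ring
  calc ∑ m, ∑ c, cipherPmf g m c * f m * G c
      = (Fintype.card K : ℝ)⁻¹ *
          ∑ k, (Fintype.card (ι → ZMod 2) : ℝ)⁻¹ * ∑ m, f m * G (m + g k) := by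
        simp only [mul_assoc, sum_cipherPmf_mul g fun m c => f m * G c]
        rw [sum_comm, ← mul_sum, mul_left_comm]
    _ = ∑ w, walshTransform f w * walshTransform G w * keystreamBias g w := by
        simp only [hk, keystreamBias, mul_sum]
        rw [sum_comm]
        exact sum_congr rfl fun w _ => sum_congr rfl fun k _ => by ring

variable [Nonempty K]

lemma sum_cipherPmf_mul_left (f : (ι → ZMod 2) → ℝ) :
    ∑ m, ∑ c, cipherPmf g m c * f m = (Fintype.card (ι → ZMod 2) : ℝ)⁻¹ * ∑ m, f m := by
  rw [sum_cipherPmf_mul g fun m _ => f m]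
  simp only [sum_const, card_univ, nsmul_eq_mul]
  rw [← mul_sum, mul_assoc, inv_mul_cancel_left₀ (by positivity)]

lemma sum_cipherPmf_mul_right (G : (ι → ZMod 2) → ℝ) :
    ∑ m, ∑ c, cipherPmf g m c * G c = (Fintype.card (ι → ZMod 2) : ℝ)⁻¹ * ∑ c, G c := by
  rw [sum_cipherPmf_mul g fun _ c => G c, sum_comm]
  have hshift (k : K) : ∑ m, G (m + g k) = ∑ c, G c := Equiv.sum_comp (Equiv.addRight (g k)) G
  simp only [hshift, sum_const, card_univ, nsmul_eq_mul]
  rw [mul_assoc, inv_mul_cancel_left₀ (by positivity)]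

lemma exists_ne_zero_sum_le_abs_keystreamBias {f G : (ι → ZMod 2) → ℝ}
    (hf : ∑ m, ∑ c, cipherPmf g m c * f m = 0)
    (hf2 : ∑ m, ∑ c, cipherPmf g m c * f m ^ 2 = 1)
    (hG2 : ∑ m, ∑ c, cipherPmf g m c * G c ^ 2 = 1) :
    ∃ v, v ≠ 0 ∧ ∑ m, ∑ c, cipherPmf g m c * f m * G c ≤ |keystreamBias g v| := by
  rw [sum_cipherPmf_mul_left, ← walshTransform_zero] at hf
  rw [sum_cipherPmf_mul_left, ← sum_sq_walshTransform] at hf2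
  rw [sum_cipherPmf_mul_right, ← sum_sq_walshTransform] at hG2
  obtain ⟨v, hv, hle⟩ := exists_mem_sum_mul_mul_le_abs (univ.filter (· ≠ 0))
    (q := keystreamBias g) (fun x hx => by simp_all) hf2 hG2
  exact ⟨v, (mem_filter.mp hv).2, (sum_cipherPmf_mul_mul g f G).trans_le hle⟩

lemma exists_sum_eq_abs_keystreamBias {v : ι → ZMod 2} (hv : v ≠ 0) :
    ∃ f G : (ι → ZMod 2) → ℝ,
      ∑ m, ∑ c, cipherPmf g m c * f m = 0 ∧ ∑ m, ∑ c, cipherPmf g m c * G c = 0 ∧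
      ∑ m, ∑ c, cipherPmf g m c * f m ^ 2 = 1 ∧ ∑ m, ∑ c, cipherPmf g m c * G c ^ 2 = 1 ∧
      |keystreamBias g v| = ∑ m, ∑ c, cipherPmf g m c * f m * G c := by
  obtain ⟨ε, hε, hεb⟩ : ∃ ε : ℝ, ε ^ 2 = 1 ∧ |keystreamBias g v| = ε * keystreamBias g v := by
    rcases abs_choice (keystreamBias g v) with h | h
    · exact ⟨1, by norm_num, by rw [h, one_mul]⟩
    · exact ⟨-1, by norm_num, by rw [h, neg_one_mul]⟩
  have hsq (x : ι → ZMod 2) : walsh v x ^ 2 = 1 := by rw [sq, walsh_mul_self]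
  refine ⟨walsh v, fun c => ε * walsh v c, ?_, ?_, ?_, ?_, ?_⟩
  · rw [sum_cipherPmf_mul_left, sum_walsh, if_neg hv, mul_zero]
  · rw [sum_cipherPmf_mul_right, ← mul_sum, sum_walsh, if_neg hv, mul_zero, mul_zero]
  · rw [sum_cipherPmf_mul_left]
    simp [hsq]
  · rw [sum_cipherPmf_mul_right]
    simp [mul_pow, hε, hsq]
  · simp [sum_cipherPmf_mul_mul, walshTransform_walsh, walshTransform_const_mul, hεb]

lemma maxCorr_cipherPmf :
    maxCorr (cipherPmf g) = sSup {r : ℝ | ∃ v, v ≠ 0 ∧ r = |keystreamBias g v|} := by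
  refine csSup_eq_csSup_of_forall_exists_le ?_ ?_
  · rintro r ⟨f, G, hf, -, hf2, hG2, rfl⟩
    obtain ⟨v, hv, hle⟩ := exists_ne_zero_sum_le_abs_keystreamBias g hf hf2 hG2
    exact ⟨_, ⟨v, hv, rfl⟩, hle⟩
  · rintro _ ⟨v, hv, rfl⟩
    exact ⟨_, exists_sum_eq_abs_keystreamBias g hv, le_rfl⟩

end StreamCipher

theorem stmt10_general (n : ℕ) {K : Type*} [Fintype K] [Nonempty K]
    (g : K → (Fin n → ZMod 2)) :
    maxCorr (fun (m c : Fin n → ZMod 2) =>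
        ((2 ^ n : ℝ))⁻¹ * ((Fintype.card K : ℝ))⁻¹ *
          ((univ.filter fun k => m + g k = c).card : ℝ)) =
    sSup {r : ℝ | ∃ v : Fin n → ZMod 2, v ≠ 0 ∧
      r = |((Fintype.card K : ℝ))⁻¹ *
        ∑ k, (if (∑ l, v l * g k l) = 0 then (1 : ℝ) else -1)|} := by
  have hcard : (2 ^ n : ℝ) = Fintype.card (Fin n → ZMod 2) := by simp
  rw [hcard]
  -- `keystreamBias` unfolds to the summand on the right: `walsh` is that `if`, `⬝ᵥ` that sum.
  exact StreamCipher.maxCorr_cipherPmf g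

theorem stmt10 (n : ℕ) (hn : 1 ≤ n) {K : Type*} [Fintype K] [Nonempty K]
    (g : K → (Fin n → ZMod 2)) :
    maxCorr (fun (m c : Fin n → ZMod 2) =>
        ((2 ^ n : ℝ))⁻¹ * ((Fintype.card K : ℝ))⁻¹ *
          ((univ.filter fun k => m + g k = c).card : ℝ)) =
    sSup {r : ℝ | ∃ v : Fin n → ZMod 2, v ≠ 0 ∧
      r = |((Fintype.card K : ℝ))⁻¹ *
        ∑ k, (if (∑ l, v l * g k l) = 0 then (1 : ℝ) else -1)|} :=
  stmt10_general n g
end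

section
/- For every ρ ∈ (0,1) and every positive integer n, there exists a binary additive stream cipher (i.e., a keystream generator g: [1:2ˢ] → {0,1}ⁿ) with key length s = ⌈2log₂(1/ρ) + log₂ n + 2⌉ such that ρ_m(M; M ⊕ g(K)) ≤ ρ, where M is uniform on {0,1}ⁿ and K uniform on [1:2ˢ] is independent of M. -/
open BigOperators Finset
open scoped Classical

/-!
Expand `f(M)` and `h(C)` in the Walsh basis of `(ZMod 2)ⁿ`. Because `C = M + g(K)` with `M`
uniform, `E[f(M) h(C)] = ∑ᵥ f̂(v) ĥ(v) β(v)`, where `β(v) = 2⁻ˢ ∑ₖ (-1)^⟨v, g k⟩` is the bias of the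
keystream at `v`. Zero mean kills the term `v = 0`, and Parseval with AM-GM bounds the rest by
`max_{v ≠ 0} |β(v)|`. A uniformly random keystream has `|β(v)| > ρ` for a fixed `v ≠ 0` with
probability at most `2 exp(-ρ² 2ˢ / 2)` (Chernoff), and the key length makes the union bound over
the `2ⁿ - 1` nonzero `v` smaller than one. Probabilities are counted as cardinalities of sets
of keystreams.
-/

section Walsh

lemma add_eq_zero_iff_eq_of_zmod_two {ι : Type*} {x y : ι → ZMod 2} : x + y = 0 ↔ x = y := by
  rw [add_eq_zero_iff_eq_neg, show -y = y from funext fun i => ZMod.neg_eq_self_mod_two (y i)]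

variable {ι : Type*} [Fintype ι]

noncomputable def walsh (v : ι → ZMod 2) : AddChar (ι → ZMod 2) ℝ :=
  (AddChar.zmodChar 2 (by norm_num : (-1 : ℝ) ^ 2 = 1)).compAddMonoidHom
    (AddMonoidHom.mk' (v ⬝ᵥ ·) (dotProduct_add v))

lemma walsh_apply (v x : ι → ZMod 2) : walsh v x = (-1) ^ (v ⬝ᵥ x).val := rfl

lemma walsh_comm (v x : ι → ZMod 2) : walsh v x = walsh x v := by
  rw [walsh_apply, walsh_apply, dotProduct_comm]

lemma walsh_eq_one_or_eq_neg_one (v x : ι → ZMod 2) : walsh v x = 1 ∨ walsh v x = -1 :=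
  neg_one_pow_eq_or ℝ _

@[simp] lemma walsh_zero_left (x : ι → ZMod 2) : walsh 0 x = 1 := by simp [walsh_apply]

lemma walsh_eq_zero_iff {v : ι → ZMod 2} : walsh v = 0 ↔ v = 0 := by
  refine ⟨fun h => ?_, fun h => by ext x; simp [h]⟩
  by_contra hv
  obtain ⟨i, hi⟩ := Function.ne_iff.mp hv
  have hvi : v i = 1 := (by decide : ∀ a : ZMod 2, a ≠ 0 → a = 1) _ hi
  have := congrArg (· (Pi.single i 1)) h
  norm_num [walsh_apply, hvi, ZMod.val_one] at this

lemma sum_walsh_apply (x : ι → ZMod 2) :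
    ∑ v, walsh v x = if x = 0 then (Fintype.card (ι → ZMod 2) : ℝ) else 0 := by
  simp_rw [walsh_comm _ x, AddChar.sum_eq_ite, walsh_eq_zero_iff]

lemma sum_walsh_mul_walsh (x y : ι → ZMod 2) :
    ∑ v, walsh v x * walsh v y = if x = y then (Fintype.card (ι → ZMod 2) : ℝ) else 0 := by
  simp_rw [← AddChar.map_add_eq_mul, sum_walsh_apply, add_eq_zero_iff_eq_of_zmod_two]

noncomputable def walshCoeff (f : (ι → ZMod 2) → ℝ) (v : ι → ZMod 2) : ℝ :=
  (Fintype.card (ι → ZMod 2) : ℝ)⁻¹ * ∑ x, f x * walsh v x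

lemma walshCoeff_zero (f : (ι → ZMod 2) → ℝ) :
    walshCoeff f 0 = (Fintype.card (ι → ZMod 2) : ℝ)⁻¹ * ∑ x, f x := by
  simp [walshCoeff]

lemma sum_walshCoeff_mul_walsh (f : (ι → ZMod 2) → ℝ) (x : ι → ZMod 2) :
    ∑ v, walshCoeff f v * walsh v x = f x := by
  simp_rw [walshCoeff, mul_assoc, ← mul_sum, sum_mul, mul_assoc]
  rw [sum_comm]
  simp_rw [← mul_sum, sum_walsh_mul_walsh, mul_ite, mul_zero, sum_ite_eq',
    mem_univ, if_true]
  field_simp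

lemma sum_mul_comp_add (f h : (ι → ZMod 2) → ℝ) (a : ι → ZMod 2) :
    ∑ x, f x * h (x + a) =
      Fintype.card (ι → ZMod 2) * ∑ v, walshCoeff f v * walshCoeff h v * walsh v a := by
  simp_rw [← sum_walshCoeff_mul_walsh h (_ + a), AddChar.map_add_eq_mul, mul_sum]
  rw [sum_comm]
  refine sum_congr rfl fun v _ => ?_
  calc ∑ x, f x * (walshCoeff h v * (walsh v x * walsh v a))
      = (∑ x, f x * walsh v x) * walshCoeff h v * walsh v a := by
        simp_rw [sum_mul]; exact sum_congr rfl fun x _ => by ring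
    _ = _ := by unfold walshCoeff; field_simp

lemma sum_walshCoeff_sq (f : (ι → ZMod 2) → ℝ) :
    ∑ v, walshCoeff f v ^ 2 = (Fintype.card (ι → ZMod 2) : ℝ)⁻¹ * ∑ x, f x ^ 2 := by
  have hc : (Fintype.card (ι → ZMod 2) : ℝ) ≠ 0 := Nat.cast_ne_zero.2 Fintype.card_ne_zero
  have h := sum_mul_comp_add f f 0
  simp only [add_zero, AddChar.map_zero_eq_one, mul_one] at h
  simp_rw [sq, h]
  field_simp

end Walsh

lemma sum_mul_mul_le_of_abs_le {α : Type*} [Fintype α] {a b t : α → ℝ} {ρ : ℝ} (hρ : 0 ≤ ρ)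
    (ha : ∑ v, a v ^ 2 = 1) (hb : ∑ v, b v ^ 2 = 1) (ht : ∀ v, a v ≠ 0 → |t v| ≤ ρ) :
    ∑ v, a v * b v * t v ≤ ρ := by
  have hterm : ∀ v, a v * b v * t v ≤ ρ * ((a v ^ 2 + b v ^ 2) / 2) := fun v => by
    by_cases hav : a v = 0
    · simp only [hav, zero_mul, zero_pow two_ne_zero, zero_add]; positivity
    calc a v * b v * t v ≤ |a v * b v| * |t v| := by rw [← abs_mul]; exact le_abs_self _
      _ ≤ |a v * b v| * ρ := by gcongr; exact ht v hav
      _ ≤ ρ * ((a v ^ 2 + b v ^ 2) / 2) := by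
        rw [mul_comm]; gcongr; rw [abs_mul]; nlinarith [sq_abs (a v), sq_abs (b v),
          sq_nonneg (|a v| - |b v|)]
  calc ∑ v, a v * b v * t v ≤ ∑ v, ρ * ((a v ^ 2 + b v ^ 2) / 2) :=
        sum_le_sum fun v _ => hterm v
    _ = ρ := by rw [← mul_sum, ← sum_div, sum_add_distrib, ha, hb]; ring

section StreamCipher

variable {V : Type*} [AddCommGroup V] [Fintype V] {K : ℕ}

/-- The joint law of `(M, M + g k)` for `M` uniform on `V` and `k` uniform on `Fin K`. -/
noncomputable def streamCipherJoint (g : Fin K → V) (m c : V) : ℝ :=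
  (Fintype.card V : ℝ)⁻¹ * (K : ℝ)⁻¹ * (#{k | m + g k = c} : ℝ)

lemma sum_sum_streamCipherJoint_mul (g : Fin K → V) (F : V → V → ℝ) :
    ∑ m, ∑ c, streamCipherJoint g m c * F m c =
      (Fintype.card V : ℝ)⁻¹ * (K : ℝ)⁻¹ * ∑ k, ∑ m, F m (m + g k) := by
  simp_rw [streamCipherJoint, natCast_card_filter, mul_assoc, ← mul_sum]
  congr 2
  rw [sum_comm (γ := Fin K)]
  refine sum_congr rfl fun m _ => ?_
  simp_rw [sum_mul, ite_mul, one_mul, zero_mul]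
  rw [sum_comm]
  simp

variable [NeZero K]

lemma sum_sum_streamCipherJoint_mul_left (g : Fin K → V) (w : V → ℝ) :
    ∑ m, ∑ c, streamCipherJoint g m c * w m = (Fintype.card V : ℝ)⁻¹ * ∑ m, w m := by
  have hK : (K : ℝ) ≠ 0 := Nat.cast_ne_zero.2 (NeZero.ne K)
  rw [sum_sum_streamCipherJoint_mul, sum_const, card_univ, Fintype.card_fin,
    nsmul_eq_mul]
  field_simp

lemma sum_sum_streamCipherJoint_mul_right (g : Fin K → V) (w : V → ℝ) :
    ∑ m, ∑ c, streamCipherJoint g m c * w c = (Fintype.card V : ℝ)⁻¹ * ∑ c, w c := by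
  have hK : (K : ℝ) ≠ 0 := Nat.cast_ne_zero.2 (NeZero.ne K)
  have htranslate (a : V) : ∑ m, w (m + a) = ∑ m, w m := Equiv.sum_comp (Equiv.addRight a) w
  simp_rw [sum_sum_streamCipherJoint_mul, htranslate]
  rw [sum_const, card_univ, Fintype.card_fin, nsmul_eq_mul]
  field_simp

end StreamCipher

section KeystreamBias

variable {ι : Type*} [Fintype ι] {K : ℕ}

/-- The paper's `ρ_m(M; C)` is the maximum of `|walshBias g v|` over `v ≠ 0`. -/
noncomputable def walshBias (g : Fin K → ι → ZMod 2) (v : ι → ZMod 2) : ℝ :=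
  (K : ℝ)⁻¹ * ∑ k, walsh v (g k)

lemma sum_sum_streamCipherJoint_mul_mul (g : Fin K → ι → ZMod 2) (f h : (ι → ZMod 2) → ℝ) :
    ∑ m, ∑ c, streamCipherJoint g m c * f m * h c =
      ∑ v, walshCoeff f v * walshCoeff h v * walshBias g v := by
  simp_rw [mul_assoc _ (f _), sum_sum_streamCipherJoint_mul, sum_mul_comp_add, ← mul_sum]
  rw [sum_comm]
  simp_rw [walshBias, mul_sum]
  refine sum_congr rfl fun v _ => sum_congr rfl fun k _ => ?_
  field_simp

theorem maxCorr_streamCipherJoint_le [NeZero K] (g : Fin K → ι → ZMod 2) {ρ : ℝ} (hρ : 0 ≤ ρ)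
    (hg : ∀ v ≠ 0, |walshBias g v| ≤ ρ) : maxCorr (streamCipherJoint g) ≤ ρ := by
  refine Real.sSup_le ?_ hρ
  rintro r ⟨f, h, hf_mean, -, hf_sq, hh_sq, rfl⟩
  rw [sum_sum_streamCipherJoint_mul_left] at hf_mean hf_sq
  rw [sum_sum_streamCipherJoint_mul_right] at hh_sq
  rw [sum_sum_streamCipherJoint_mul_mul]
  refine sum_mul_mul_le_of_abs_le hρ ?_ ?_ fun v hv => hg v ?_
  · rwa [sum_walshCoeff_sq]
  · rwa [sum_walshCoeff_sq]
  · rintro rfl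
    exact hv (by rw [walshCoeff_zero, hf_mean])

end KeystreamBias

section Chernoff

variable {α : Type*} [Fintype α] {φ : α → ℝ}

lemma sum_exp_mul_eq_card_mul_cosh (hφ : ∀ a, φ a = 1 ∨ φ a = -1) (hφ0 : ∑ a, φ a = 0)
    (t : ℝ) : ∑ a, Real.exp (t * φ a) = Fintype.card α * Real.cosh t := by
  have hexp (a : α) : Real.exp (t * φ a) = Real.cosh t + Real.sinh t * φ a := by
    rcases hφ a with h | h
    · rw [h, mul_one, mul_one, Real.cosh_add_sinh]
    · rw [h, mul_neg_one, mul_neg_one, ← sub_eq_add_neg, Real.cosh_sub_sinh]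
  simp_rw [hexp, sum_add_distrib, ← mul_sum, hφ0]
  simp

lemma card_filter_le_sum_le_exp (hφ : ∀ a, φ a = 1 ∨ φ a = -1) (hφ0 : ∑ a, φ a = 0) {ε : ℝ}
    (hε : 0 ≤ ε) (K : ℕ) :
    (#{x : Fin K → α | ε * K ≤ ∑ k, φ (x k)} : ℝ) ≤
      Fintype.card α ^ K * Real.exp (-(ε ^ 2 * K / 2)) := by
  set S : Finset (Fin K → α) := {x | ε * K ≤ ∑ k, φ (x k)}
  have hmarkov : #S * Real.exp (ε ^ 2 * K) ≤ ∑ x : Fin K → α, Real.exp (ε * ∑ k, φ (x k)) :=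
    calc #S * Real.exp (ε ^ 2 * K) ≤ ∑ x ∈ S, Real.exp (ε * ∑ k, φ (x k)) := by
          rw [← nsmul_eq_mul]
          refine card_nsmul_le_sum _ _ _ fun x hx => Real.exp_le_exp.2 ?_
          have := (mem_filter.1 hx).2
          nlinarith
      _ ≤ ∑ x : Fin K → α, Real.exp (ε * ∑ k, φ (x k)) :=
          sum_le_sum_of_subset_of_nonneg (subset_univ _)
            fun _ _ _ => (Real.exp_pos _).le
  have hmgf : ∑ x : Fin K → α, Real.exp (ε * ∑ k, φ (x k)) =
      (Fintype.card α * Real.cosh ε) ^ K := by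
    simp_rw [mul_sum, Real.exp_sum]
    rw [← sum_exp_mul_eq_card_mul_cosh hφ hφ0, Fintype.sum_pow]
  have hcosh : (Fintype.card α * Real.cosh ε) ^ K ≤
      Fintype.card α ^ K * Real.exp (ε ^ 2 * K / 2) := by
    rw [mul_pow, show ε ^ 2 * K / 2 = K * (ε ^ 2 / 2) by ring, Real.exp_nat_mul]
    gcongr
    exact Real.cosh_le_exp_half_sq ε
  rw [← le_div_iff₀ (Real.exp_pos _)] at hmarkov
  calc (#S : ℝ) ≤ Fintype.card α ^ K * Real.exp (ε ^ 2 * K / 2) / Real.exp (ε ^ 2 * K) :=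
        hmarkov.trans (by rw [hmgf]; gcongr)
    _ = Fintype.card α ^ K * Real.exp (-(ε ^ 2 * K / 2)) := by
        rw [mul_div_assoc, ← Real.exp_sub]; ring_nf

lemma card_filter_lt_abs_sum_le_exp (hφ : ∀ a, φ a = 1 ∨ φ a = -1) (hφ0 : ∑ a, φ a = 0) {ε : ℝ}
    (hε : 0 ≤ ε) (K : ℕ) :
    (#{x : Fin K → α | ε * K < |∑ k, φ (x k)|} : ℝ) ≤
      2 * Fintype.card α ^ K * Real.exp (-(ε ^ 2 * K / 2)) := by
  have hupper := card_filter_le_sum_le_exp hφ hφ0 hε K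
  have hlower := card_filter_le_sum_le_exp (φ := fun a => -φ a)
    (fun a => (hφ a).symm.imp neg_eq_iff_eq_neg.2 (by simp))
    (by rw [sum_neg_distrib, hφ0, neg_zero]) hε K
  have hsplit : ({x : Fin K → α | ε * K < |∑ k, φ (x k)|} : Finset _) ⊆
      ({x : Fin K → α | ε * K ≤ ∑ k, φ (x k)} : Finset _) ∪
        ({x : Fin K → α | ε * K ≤ ∑ k, -φ (x k)} : Finset _) := by
    intro x hx
    simp only [mem_filter, mem_union, mem_univ, true_and] at hx ⊢
    rcases lt_abs.1 hx with h | h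
    · exact Or.inl h.le
    · exact Or.inr (by rw [sum_neg_distrib]; exact h.le)
  calc (#{x : Fin K → α | ε * K < |∑ k, φ (x k)|} : ℝ)
      ≤ #{x : Fin K → α | ε * K ≤ ∑ k, φ (x k)} +
          #{x : Fin K → α | ε * K ≤ ∑ k, -φ (x k)} := by
        exact_mod_cast (card_le_card hsplit).trans (card_union_le _ _)
    _ ≤ _ := by linarith

end Chernoff

lemma exists_forall_notMem_of_sum_card_lt {β γ : Type*} [Fintype β] (s : Finset γ)
    (B : γ → Finset β) (h : ∑ i ∈ s, (#(B i) : ℝ) < Fintype.card β) :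
    ∃ b, ∀ i ∈ s, b ∉ B i := by
  by_contra! hcover
  have hsub : (univ : Finset β) ⊆ s.biUnion B := fun b _ => by
    obtain ⟨i, hi, hb⟩ := hcover b
    exact mem_biUnion.2 ⟨i, hi, hb⟩
  have hcard := (card_le_card hsub).trans card_biUnion_le
  rw [card_univ] at hcard
  exact h.not_ge (by exact_mod_cast hcard)

theorem exists_forall_abs_walshBias_le {ι : Type*} [Fintype ι] (K : ℕ) [NeZero K] {ε : ℝ}
    (hε : 0 ≤ ε)
    (h : 2 * ((Fintype.card (ι → ZMod 2) : ℝ) - 1) * Real.exp (-(ε ^ 2 * K / 2)) < 1) :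
    ∃ g : Fin K → ι → ZMod 2, ∀ v ≠ 0, |walshBias g v| ≤ ε := by
  set N : ℝ := (Fintype.card (ι → ZMod 2) : ℝ)
  set bad : (ι → ZMod 2) → Finset (Fin K → ι → ZMod 2) :=
    fun v => {x | ε * K < |∑ k, walsh v (x k)|}
  have hbad : ∀ v ∈ univ.erase (0 : ι → ZMod 2),
      (#(bad v) : ℝ) ≤ 2 * N ^ K * Real.exp (-(ε ^ 2 * K / 2)) := fun v hv =>
    card_filter_lt_abs_sum_le_exp (walsh_eq_one_or_eq_neg_one v)
      (AddChar.sum_eq_zero_iff_ne_zero.2 (walsh_eq_zero_iff.not.2 (ne_of_mem_erase hv))) hε K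
  obtain ⟨g, hg⟩ := exists_forall_notMem_of_sum_card_lt _ bad <| (sum_le_sum hbad).trans_lt <| by
    rw [sum_const, card_erase_of_mem (mem_univ _), card_univ, nsmul_eq_mul,
      Nat.cast_pred Fintype.card_pos, Fintype.card_fun (α := Fin K), Fintype.card_fin, Nat.cast_pow]
    calc (N - 1) * (2 * N ^ K * Real.exp (-(ε ^ 2 * K / 2)))
        = 2 * (N - 1) * Real.exp (-(ε ^ 2 * K / 2)) * N ^ K := by ring
      _ < 1 * N ^ K := by gcongr
      _ = N ^ K := one_mul _
  refine ⟨g, fun v hv => ?_⟩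
  have hgv := hg v (mem_erase.2 ⟨hv, mem_univ _⟩)
  simp only [bad, mem_filter, mem_univ, true_and, not_lt] at hgv
  have hK : (0 : ℝ) < K := Nat.cast_pos.2 (Nat.pos_of_neZero K)
  rw [walshBias, abs_mul, abs_inv, Nat.abs_cast, inv_mul_le_iff₀ hK]
  linarith

lemma two_mul_two_pow_sub_one_lt_exp (n : ℕ) : 2 * ((2 : ℝ) ^ n - 1) < Real.exp (2 * n) := by
  have hexp : (4 : ℝ) ^ n ≤ Real.exp (2 * n) := by
    have h4 : (4 : ℝ) ≤ Real.exp 2 := by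
      have := Real.exp_one_gt_d9
      rw [show (2 : ℝ) = 1 + 1 by norm_num, Real.exp_add]
      nlinarith
    rw [show (2 : ℝ) * n = n * 2 by ring, Real.exp_nat_mul]
    exact pow_le_pow_left₀ (by norm_num) h4 n
  have hsq : (4 : ℝ) ^ n = (2 ^ n) ^ 2 := by rw [← pow_mul, mul_comm, pow_mul]; norm_num
  nlinarith [sq_nonneg ((2 : ℝ) ^ n - 1)]

lemma four_mul_div_sq_le_two_pow {n s : ℕ} {ρ : ℝ} (hρ : 0 < ρ)
    (hs : s = ⌈2 * Real.logb 2 (1 / ρ) + Real.logb 2 n + 2⌉₊) : 4 * n / ρ ^ 2 ≤ (2 : ℝ) ^ s := by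
  rcases Nat.eq_zero_or_pos n with rfl | hn
  · simp
  have hlog : Real.logb 2 (4 * n / ρ ^ 2) ≤ s := by
    calc Real.logb 2 (4 * n / ρ ^ 2) = Real.logb 2 ((1 / ρ) ^ 2 * n * 2 ^ 2) := by
          congr 1; field_simp; norm_num
      _ = 2 * Real.logb 2 (1 / ρ) + Real.logb 2 n + 2 := by
          rw [Real.logb_mul (by positivity) (by positivity),
            Real.logb_mul (by positivity) (by positivity), Real.logb_pow, Real.logb_pow,
            Real.logb_self_eq_one one_lt_two]
          push_cast; ring
      _ ≤ s := hs ▸ Nat.le_ceil _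
  rwa [Real.logb_le_iff_le_rpow one_lt_two (by positivity), Real.rpow_natCast] at hlog

theorem stmt12_general (n : ℕ) (ρ : ℝ) (hρ0 : 0 < ρ)
    (s : ℕ) (hs : s = ⌈2 * Real.logb 2 (1 / ρ) + Real.logb 2 (n : ℝ) + 2⌉₊) :
    ∃ g : Fin (2 ^ s) → Fin n → ZMod 2,
      maxCorr (fun (m c : Fin n → ZMod 2) =>
        ((2 ^ n : ℝ))⁻¹ * ((2 ^ s : ℝ))⁻¹ *
          ((univ.filter fun k => m + g k = c).card : ℝ)) ≤ ρ := by
  have hK := four_mul_div_sq_le_two_pow hρ0 hs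
  have hexp : (2 * n : ℝ) ≤ ρ ^ 2 * 2 ^ s / 2 := by
    rw [div_le_iff₀ (by positivity)] at hK
    linarith
  obtain ⟨g, hg⟩ := exists_forall_abs_walshBias_le (ι := Fin n) (2 ^ s) hρ0.le <| by
    simp only [Fintype.card_fun, Fintype.card_fin, ZMod.card, Nat.cast_pow, Nat.cast_ofNat]
    rw [Real.exp_neg, ← div_eq_mul_inv, div_lt_one (Real.exp_pos _)]
    exact (two_mul_two_pow_sub_one_lt_exp n).trans_le (Real.exp_le_exp.2 hexp)
  refine ⟨g, ?_⟩
  convert maxCorr_streamCipherJoint_le g hρ0.le hg using 2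
  funext m c
  simp only [streamCipherJoint, Fintype.card_fun, Fintype.card_fin, ZMod.card, Nat.cast_pow,
    Nat.cast_ofNat]
  -- the two filters differ only in their `DecidableEq` instances
  congr

theorem stmt12 (n : ℕ) (hn : 1 ≤ n) (ρ : ℝ) (hρ0 : 0 < ρ) (hρ1 : ρ < 1)
    (s : ℕ) (hs : s = ⌈2 * Real.logb 2 (1 / ρ) + Real.logb 2 (n : ℝ) + 2⌉₊) :
    ∃ g : Fin (2 ^ s) → Fin n → ZMod 2,
      maxCorr (fun (m c : Fin n → ZMod 2) =>
        ((2 ^ n : ℝ))⁻¹ * ((2 ^ s : ℝ))⁻¹ *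
          ((univ.filter fun k => m + g k = c).card : ℝ)) ≤ ρ :=
  stmt12_general n ρ hρ0 s hs
end
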